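/- arXiv:2210.00535 — 6 statements merged into one kernel-verified Lean document; each statement's English description precedes it below -/
import Mathlib

section
/- Let L be a set and let ((X_n, α_n))_{n∈ℕ} be a sequence of L-labeled metric spaces that is Cauchy with respect to the labeled Gromov–Hausdorff distance d^L_GH (i.e., for every ε > 0 there is N such that d^L_GH(X_n,α_n;X_m,α_m) < ε for all n, m ≥ N). Then there exists an L-labeled metric space (X,α) such that d^L_GH(X_n,α_n;X,α) → 0 as n → ∞. -/
open Filter Topology Metric Set

/-- A `(t,L)`-admissible pseudometric on the disjoint union `X ⊕ Y` of two `L`-labeled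
compact metric spaces `(X, α)` and `(Y, β)`: it is a pseudometric restricting to the
metrics of `X` and `Y`, the Hausdorff distance between `X` and `Y` computed with it is
at most `t`, and `sup_{ℓ ∈ L} d(α ℓ, β ℓ) ≤ t`. -/
def IsAdmissible {L X Y : Type*} [MetricSpace X] [MetricSpace Y]
    (α : L → X) (β : L → Y) (t : ℝ) (d : X ⊕ Y → X ⊕ Y → ℝ) : Prop :=
  (∀ p, d p p = 0) ∧
  (∀ p q, d p q = d q p) ∧
  (∀ p q r, d p r ≤ d p q + d q r) ∧
  (∀ x x' : X, d (Sum.inl x) (Sum.inl x') = dist x x') ∧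
  (∀ y y' : Y, d (Sum.inr y) (Sum.inr y') = dist y y') ∧
  (∀ x : X, ∀ ε > (0 : ℝ), ∃ y : Y, d (Sum.inl x) (Sum.inr y) ≤ t + ε) ∧
  (∀ y : Y, ∀ ε > (0 : ℝ), ∃ x : X, d (Sum.inl x) (Sum.inr y) ≤ t + ε) ∧
  (∀ ℓ : L, d (Sum.inl (α ℓ)) (Sum.inr (β ℓ)) ≤ t)

/-- The labeled Gromov–Hausdorff distance of `(X, α)` and `(Y, β)`. -/
noncomputable def lghDist {L X Y : Type*} [MetricSpace X] [MetricSpace Y]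
    (α : L → X) (β : L → Y) : ℝ :=
  sInf {t : ℝ | 0 ≤ t ∧ ∃ d : X ⊕ Y → X ⊕ Y → ℝ, IsAdmissible α β t d}

/-! helpers -/

lemma csInf_le_add_csInf {S T : Set ℝ} (hT : T.Nonempty) (hSb : BddBelow S) {c : ℝ}
    (h : ∀ t ∈ T, ∃ s ∈ S, s ≤ c + t) : sInf S ≤ c + sInf T := by
  refine le_of_forall_pos_le_add fun ε hε => ?_
  obtain ⟨t, htT, hlt⟩ := Real.lt_sInf_add_pos hT hε
  obtain ⟨s, hsS, hle⟩ := h t htT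
  have := csInf_le hSb hsS
  linarith

lemma le_csInf_add_csInf {S T : Set ℝ} (hS : S.Nonempty) (hT : T.Nonempty) {c : ℝ}
    (h : ∀ s ∈ S, ∀ t ∈ T, c ≤ s + t) : c ≤ sInf S + sInf T := by
  refine le_of_forall_pos_le_add fun ε hε => ?_
  obtain ⟨s, hsS, hs⟩ := Real.lt_sInf_add_pos hS (half_pos hε)
  obtain ⟨t, htT, ht⟩ := Real.lt_sInf_add_pos hT (half_pos hε)
  have := h s hsS t htT
  linarith

lemma adm_nonneg {L X Y : Type*} [MetricSpace X] [MetricSpace Y] {α : L → X} {β : L → Y}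
    {t : ℝ} {d : X ⊕ Y → X ⊕ Y → ℝ} (h : IsAdmissible α β t d) (p q : X ⊕ Y) : 0 ≤ d p q := by
  obtain ⟨hr, hs, htri, -⟩ := h
  have h1 := htri p q p
  have h2 := hs p q
  have h3 := hr p
  nlinarith [hs q p]

lemma adm_mono {L X Y : Type*} [MetricSpace X] [MetricSpace Y] {α : L → X} {β : L → Y}
    {t t' : ℝ} {d : X ⊕ Y → X ⊕ Y → ℝ} (h : IsAdmissible α β t d) (htt' : t ≤ t') :
    IsAdmissible α β t' d := by
  obtain ⟨h1, h2, h3, h4, h5, h6, h7, h8⟩ := h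
  refine ⟨h1, h2, h3, h4, h5, fun x ε hε => ?_, fun y ε hε => ?_, fun ℓ => (h8 ℓ).trans htt'⟩
  · obtain ⟨y, hy⟩ := h6 x ε hε; exact ⟨y, hy.trans (by linarith)⟩
  · obtain ⟨x, hx⟩ := h7 y ε hε; exact ⟨x, hx.trans (by linarith)⟩

lemma lghDist_le {L X Y : Type*} [MetricSpace X] [MetricSpace Y] {α : L → X} {β : L → Y}
    {t : ℝ} {d : X ⊕ Y → X ⊕ Y → ℝ} (ht : 0 ≤ t) (h : IsAdmissible α β t d) :
    lghDist α β ≤ t :=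
  csInf_le ⟨0, fun _ hs => hs.1⟩ ⟨ht, d, h⟩

lemma lghDist_nonneg {L X Y : Type*} [MetricSpace X] [MetricSpace Y] (α : L → X) (β : L → Y) :
    0 ≤ lghDist α β :=
  Real.sInf_nonneg fun _ hx => hx.1

lemma exists_adm {L X Y : Type*} [MetricSpace X] [MetricSpace Y] [CompactSpace X] [CompactSpace Y]
    [Nonempty X] [Nonempty Y] (α : L → X) (β : L → Y) :
    ∃ t, 0 ≤ t ∧ ∃ d, IsAdmissible α β t d := by
  set C : ℝ := diam (univ : Set X) + diam (univ : Set Y) + 1 with hC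
  have hdX : ∀ x x' : X, dist x x' ≤ diam (univ : Set X) :=
    fun x x' => dist_le_diam_of_mem isCompact_univ.isBounded (mem_univ x) (mem_univ x')
  have hdY : ∀ y y' : Y, dist y y' ≤ diam (univ : Set Y) :=
    fun y y' => dist_le_diam_of_mem isCompact_univ.isBounded (mem_univ y) (mem_univ y')
  have hX0 : (0:ℝ) ≤ diam (univ : Set X) := diam_nonneg
  have hY0 : (0:ℝ) ≤ diam (univ : Set Y) := diam_nonneg
  have hC0 : 0 ≤ C := by positivity
  refine ⟨C, hC0, fun p q => match p, q with
    | .inl x, .inl x' => dist x x'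
    | .inl _, .inr _ => C
    | .inr _, .inl _ => C
    | .inr z, .inr z' => dist z z', ?_, ?_, ?_, fun _ _ => rfl, fun _ _ => rfl, ?_, ?_, ?_⟩
  · rintro (x | y) <;> simp
  · rintro (x | y) (x' | y') <;> simp [dist_comm]
  · rintro (x | y) (x' | y') (x'' | y'') <;> simp only
    · exact dist_triangle _ _ _
    · linarith [dist_nonneg (x := x) (y := x')]
    · linarith [hdX x x'']
    · linarith [dist_nonneg (x := y') (y := y'')]
    · linarith [dist_nonneg (x := x') (y := x'')]
    · linarith [hdY y y'']
    · linarith [dist_nonneg (x := y) (y := y')]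
    · exact dist_triangle _ _ _
  · intro x ε hε
    exact ⟨Classical.arbitrary Y, by linarith⟩
  · intro y ε hε
    exact ⟨Classical.arbitrary X, by linarith⟩
  · intro ℓ; exact le_refl C

lemma adm_comp {L X Y Z : Type*} [MetricSpace X] [MetricSpace Y] [MetricSpace Z] [Nonempty Y]
    {α : L → X} {β : L → Y} {γ : L → Z} {t1 t2 : ℝ}
    {d1 : X ⊕ Y → X ⊕ Y → ℝ} {d2 : Y ⊕ Z → Y ⊕ Z → ℝ}
    (h1 : IsAdmissible α β t1 d1) (h2 : IsAdmissible β γ t2 d2) :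
    ∃ D, IsAdmissible α γ (t1 + t2) D := by
  classical
  set c : X → Z → ℝ := fun x z =>
    sInf (Set.range fun y : Y => d1 (.inl x) (.inr y) + d2 (.inl y) (.inr z)) with hc
  have hne : ∀ x z, (Set.range fun y : Y =>
      d1 (.inl x) (.inr y) + d2 (.inl y) (.inr z)).Nonempty := fun x z => Set.range_nonempty _
  have hbdd : ∀ x z, BddBelow (Set.range fun y : Y =>
      d1 (.inl x) (.inr y) + d2 (.inl y) (.inr z)) := by
    intro x z
    refine ⟨0, ?_⟩
    rintro s ⟨y, rfl⟩
    dsimp only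
    have := adm_nonneg h1 (.inl x) (.inr y)
    have := adm_nonneg h2 (.inl y) (.inr z)
    linarith
  obtain ⟨h1r, h1s, h1t, h1X, h1Y, h1H1, h1H2, h1L⟩ := h1
  obtain ⟨h2r, h2s, h2t, h2X, h2Y, h2H1, h2H2, h2L⟩ := h2
  -- basic cross inequalities
  have e1 : ∀ (x x' : X) (y : Y), d1 (.inl x) (.inr y) ≤ dist x x' + d1 (.inl x') (.inr y) := by
    intro x x' y
    have := h1t (.inl x) (.inl x') (.inr y); rw [h1X] at this; linarith
  have e2 : ∀ (x : X) (y y' : Y), d1 (.inl x) (.inr y) ≤ d1 (.inl x) (.inr y') + dist y' y := by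
    intro x y y'
    have := h1t (.inl x) (.inr y') (.inr y); rw [h1Y] at this; linarith
  have e3 : ∀ (y y' : Y) (z : Z), d2 (.inl y) (.inr z) ≤ dist y y' + d2 (.inl y') (.inr z) := by
    intro y y' z
    have := h2t (.inl y) (.inl y') (.inr z); rw [h2X] at this; linarith
  have e4 : ∀ (y : Y) (z z' : Z), d2 (.inl y) (.inr z) ≤ d2 (.inl y) (.inr z') + dist z' z := by
    intro y z z'
    have := h2t (.inl y) (.inr z') (.inr z); rw [h2Y] at this; linarith
  have e5 : ∀ (x x' : X) (y y' : Y), dist x x' ≤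
      d1 (.inl x) (.inr y) + dist y y' + d1 (.inl x') (.inr y') := by
    intro x x' y y'
    have t1 := h1t (.inl x) (.inr y) (.inl x')
    have t2 := h1t (.inr y) (.inr y') (.inl x')
    rw [h1X] at t1; rw [h1Y] at t2
    have s1 := h1s (.inr y') (.inl x')
    linarith
  have e6 : ∀ (y y' : Y) (z z' : Z), dist y y' ≤
      d2 (.inl y) (.inr z) + dist z z' + d2 (.inl y') (.inr z') := by
    intro y y' z z'
    have t1 := h2t (.inl y) (.inr z) (.inl y')
    have t2 := h2t (.inr z) (.inr z') (.inl y')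
    rw [h2X] at t1; rw [h2Y] at t2
    have s1 := h2s (.inr z') (.inl y')
    linarith
  -- the composed candidate
  refine ⟨fun p q => match p, q with
    | .inl x, .inl x' => dist x x'
    | .inl x, .inr z => c x z
    | .inr z, .inl x => c x z
    | .inr z, .inr z' => dist z z', ?_, ?_, ?_, fun _ _ => rfl, fun _ _ => rfl, ?_, ?_, ?_⟩
  · rintro (x | z) <;> simp
  · rintro (x | z) (x' | z') <;> simp [dist_comm]
  · rintro (x | z) (x' | z') (x'' | z'') <;> simp only
    · exact dist_triangle _ _ _
    · -- c x z'' ≤ dist x x' + c x' z''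
      refine csInf_le_add_csInf (hne x' z'') (hbdd x z'') ?_
      rintro s ⟨y, rfl⟩
      refine ⟨_, ⟨y, rfl⟩, ?_⟩
      dsimp only
      have := e1 x x' y
      linarith
    · -- dist x x'' ≤ c x z' + c x'' z'
      refine le_csInf_add_csInf (hne x z') (hne x'' z') ?_
      rintro s ⟨y, rfl⟩ u ⟨y', rfl⟩
      dsimp only
      have h5 := e5 x x'' y y'
      have h6 := e6 y y' z' z'
      simp only [dist_self, add_zero] at h6
      linarith
    · -- c x z'' ≤ c x z' + dist z' z''
      rw [add_comm]
      refine csInf_le_add_csInf (hne x z') (hbdd x z'') ?_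
      rintro s ⟨y, rfl⟩
      refine ⟨_, ⟨y, rfl⟩, ?_⟩
      dsimp only
      have := e4 y z'' z'
      linarith
    · -- c x' z ≤ c x z + dist x x'
      rw [add_comm]
      refine csInf_le_add_csInf (hne x' z) (hbdd x'' z) ?_
      rintro s ⟨y, rfl⟩
      refine ⟨_, ⟨y, rfl⟩, ?_⟩
      dsimp only
      have := e1 x'' x' y
      rw [dist_comm x'' x'] at this
      linarith
    · -- dist z z'' ≤ c x' z + c x' z''
      refine le_csInf_add_csInf (hne x' z) (hne x' z'') ?_
      rintro s ⟨y, rfl⟩ u ⟨y', rfl⟩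
      dsimp only
      have t1 := h2t (.inr z) (.inl y) (.inr z'')
      rw [h2Y] at t1
      have s1 := h2s (.inr z) (.inl y)
      have t2 := e3 y y' z''
      have u1 := h1t (.inr y) (.inl x') (.inr y')
      rw [h1Y] at u1
      have u2 := h1s (.inr y) (.inl x')
      linarith
    · -- c x'' z ≤ dist z z' + c x'' z'
      refine csInf_le_add_csInf (hne x'' z') (hbdd x'' z) ?_
      rintro s ⟨y, rfl⟩
      refine ⟨_, ⟨y, rfl⟩, ?_⟩
      dsimp only
      have := e4 y z z'
      rw [dist_comm z' z] at this
      linarith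
    · exact dist_triangle _ _ _
  · -- Hausdorff 1
    intro x ε hε
    obtain ⟨y, hy⟩ := h1H1 x (ε/2) (by linarith)
    obtain ⟨z, hz⟩ := h2H1 y (ε/2) (by linarith)
    refine ⟨z, ?_⟩
    have := csInf_le (hbdd x z) ⟨y, rfl⟩
    dsimp only at this
    linarith
  · -- Hausdorff 2
    intro z ε hε
    obtain ⟨y, hy⟩ := h2H2 z (ε/2) (by linarith)
    obtain ⟨x, hx⟩ := h1H2 y (ε/2) (by linarith)
    refine ⟨x, ?_⟩
    have := csInf_le (hbdd x z) ⟨y, rfl⟩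
    dsimp only at this
    linarith
  · intro ℓ
    have := csInf_le (hbdd (α ℓ) (γ ℓ)) ⟨β ℓ, rfl⟩
    dsimp only at this
    have l1 := h1L ℓ
    have l2 := h2L ℓ
    linarith

section Delta

variable {ι : ℕ → Type*} [∀ n, MetricSpace (ι n)] (d : ∀ n, ι n → ι (n+1) → ℝ)

/-- Chained composition of the metrics of the `ι k` with the cross pseudodistances `d k`. -/
noncomputable def delC : ∀ {n m : ℕ}, n ≤ m → ι n → ι m → ℝ :=
  fun {n} {_} h => Nat.leRec (motive := fun m _ => ι n → ι m → ℝ)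
    (fun x y => dist x y)
    (fun m _ prev x z => sInf (Set.range fun w : ι m => prev x w + d m w z)) h

@[simp] lemma delC_self {n : ℕ} (x y : ι n) : delC d (le_refl n) x y = dist x y := by
  unfold delC
  rw [Nat.leRec_self]

lemma delC_succ {n m : ℕ} (h : n ≤ m) (h' : n ≤ m + 1) (x : ι n) (z : ι (m+1)) :
    delC d h' x z = sInf (Set.range fun w : ι m => delC d h x w + d m w z) := by
  unfold delC
  rw [Nat.leRec_succ _ _ h]

variable (hne : ∀ n, Nonempty (ι n))
  (hd0 : ∀ n x y, 0 ≤ d n x y)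
  (hd2 : ∀ n (x x' : ι n) y, dist x x' ≤ d n x y + d n x' y)
  (hd3 : ∀ n (x : ι n) y y', dist y y' ≤ d n x y + d n x y')
  (hd4 : ∀ n (x x' : ι n) y, d n x y ≤ dist x x' + d n x' y)
  (hd5 : ∀ n (x : ι n) y y', d n x y ≤ d n x y' + dist y' y)

section nonneg
include hne hd0

lemma delC_nonneg {n m : ℕ} (h : n ≤ m) : ∀ (x : ι n) (y : ι m), 0 ≤ delC d h x y := by
  induction m, h using Nat.le_induction with
  | base => intro x y; rw [delC_self]; exact dist_nonneg
  | succ m h ih =>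
    intro x z
    rw [delC_succ d h]
    refine le_csInf (have := hne m; Set.range_nonempty _) ?_
    rintro b ⟨w, rfl⟩
    dsimp only
    have := ih x w
    have := hd0 m w z
    linarith

lemma delC_bdd {n m : ℕ} (h : n ≤ m) (x : ι n) (z : ι (m+1)) :
    BddBelow (Set.range fun w : ι m => delC d h x w + d m w z) := by
  refine ⟨0, ?_⟩
  rintro b ⟨w, rfl⟩
  dsimp only
  have := delC_nonneg d hne hd0 h x w
  have := hd0 m w z
  linarith

end nonneg

include hne hd0

lemma delC_lip_right (hd5' : ∀ n (x : ι n) y y', d n x y ≤ d n x y' + dist y' y)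
    {n m : ℕ} (h : n ≤ m) : ∀ (x : ι n) (y y' : ι m),
    delC d h x y ≤ delC d h x y' + dist y' y := by
  induction m, h using Nat.le_induction with
  | base => intro x y y'; rw [delC_self, delC_self]; exact dist_triangle _ _ _
  | succ m h _ =>
    intro x z z'
    rw [delC_succ d h, delC_succ d h, add_comm]
    refine csInf_le_add_csInf (have := hne m; Set.range_nonempty _) (delC_bdd d hne hd0 h x z) ?_
    rintro b ⟨w, rfl⟩
    refine ⟨_, ⟨w, rfl⟩, ?_⟩
    dsimp only
    have := hd5' m w z z'
    linarith

lemma delC_lip_left {n m : ℕ} (h : n ≤ m) : ∀ (x x' : ι n) (y : ι m),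
    delC d h x y ≤ dist x x' + delC d h x' y := by
  induction m, h using Nat.le_induction with
  | base => intro x x' y; rw [delC_self, delC_self]; exact dist_triangle _ _ _
  | succ m h ih =>
    intro x x' z
    rw [delC_succ d h, delC_succ d h]
    refine csInf_le_add_csInf (have := hne m; Set.range_nonempty _) (delC_bdd d hne hd0 h x z) ?_
    rintro b ⟨w, rfl⟩
    refine ⟨_, ⟨w, rfl⟩, ?_⟩
    dsimp only
    have := ih x x' w
    linarith

include hd3 hd4 in
lemma delC_two_right {n m : ℕ} (h : n ≤ m) : ∀ (x : ι n) (y y' : ι m),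
    dist y y' ≤ delC d h x y + delC d h x y' := by
  induction m, h using Nat.le_induction with
  | base =>
    intro x y y'
    rw [delC_self, delC_self]
    have := dist_triangle y x y'
    rw [dist_comm y x] at this
    linarith
  | succ m h ih =>
    intro x z z'
    rw [delC_succ d h, delC_succ d h]
    refine le_csInf_add_csInf (have := hne m; Set.range_nonempty _)
      (have := hne m; Set.range_nonempty _) ?_
    rintro b ⟨w, rfl⟩ b' ⟨w', rfl⟩
    dsimp only
    have h1 := hd3 m w z z'
    have h2 := hd4 m w w' z'
    have h3 := ih x w w'
    linarith

include hd2 hd5 in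
lemma delC_two_left {n m : ℕ} (h : n ≤ m) : ∀ (x x' : ι n) (y : ι m),
    dist x x' ≤ delC d h x y + delC d h x' y := by
  induction m, h using Nat.le_induction with
  | base =>
    intro x x' y
    rw [delC_self, delC_self]
    have := dist_triangle x y x'
    rw [dist_comm y x'] at this
    linarith
  | succ m h ih =>
    intro x x' z
    rw [delC_succ d h, delC_succ d h]
    refine le_csInf_add_csInf (have := hne m; Set.range_nonempty _)
      (have := hne m; Set.range_nonempty _) ?_
    rintro b ⟨w, rfl⟩ b' ⟨w', rfl⟩
    dsimp only
    have h1 := ih x x' w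
    have h2 := delC_lip_right d hne hd0 hd5 h x' w w'
    have h3 := hd2 m w' w z
    have h4 : dist w' w = dist w w' := dist_comm w' w
    linarith

include hd5 in
lemma delC_trans {n a m : ℕ} (h1 : n ≤ a) (h2 : a ≤ m) :
    ∀ (x : ι n) (y : ι a) (z : ι m),
    delC d (h1.trans h2) x z ≤ delC d h1 x y + delC d h2 y z := by
  induction m, h2 using Nat.le_induction with
  | base =>
    intro x y z
    rw [delC_self]
    exact delC_lip_right d hne hd0 hd5 h1 x z y
  | succ m h2 ih =>
    intro x y z
    rw [delC_succ d (h1.trans h2), delC_succ d h2]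
    refine csInf_le_add_csInf (have := hne m; Set.range_nonempty _)
      (delC_bdd d hne hd0 (h1.trans h2) x z) ?_
    rintro b ⟨w, rfl⟩
    refine ⟨_, ⟨w, rfl⟩, ?_⟩
    dsimp only
    have := ih x y w
    linarith

lemma delC_split {n a m : ℕ} (h1 : n ≤ a) (h2 : a ≤ m) :
    ∀ (x : ι n) (z : ι m) (ε : ℝ), 0 < ε →
    ∃ w : ι a, delC d h1 x w + delC d h2 w z ≤ delC d (h1.trans h2) x z + ε := by
  induction m, h2 using Nat.le_induction with
  | base =>
    intro x z ε hε
    refine ⟨z, ?_⟩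
    rw [delC_self, dist_self]
    have : delC d (h1.trans (le_refl a)) x z = delC d h1 x z := rfl
    rw [this]
    linarith
  | succ m h2 ih =>
    intro x z ε hε
    have hrw := delC_succ d (h1.trans h2) (h1.trans (Nat.le_succ_of_le h2)) x z
    have hn : (Set.range fun w : ι m => delC d (h1.trans h2) x w + d m w z).Nonempty :=
      have := hne m; Set.range_nonempty _
    obtain ⟨b, ⟨w', rfl⟩, hb⟩ := Real.lt_sInf_add_pos hn (half_pos hε)
    obtain ⟨w, hw⟩ := ih x w' (ε/2) (half_pos hε)
    refine ⟨w, ?_⟩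
    have hle : delC d (h2.trans (Nat.le_succ m)) w z ≤ delC d h2 w w' + d m w' z := by
      rw [delC_succ d h2]
      exact csInf_le (delC_bdd d hne hd0 h2 w z) ⟨w', rfl⟩
    dsimp only at hb
    rw [hrw]
    have : delC d (h2.trans (Nat.le_succ m)) w z = delC d (Nat.le_succ_of_le h2) w z := rfl
    rw [this] at hle
    have : delC d (h1.trans (Nat.le_succ_of_le h2)) x z =
      delC d ((h1.trans h2).trans (Nat.le_succ m)) x z := rfl
    linarith

lemma delC_one (n : ℕ) (x : ι n) (y : ι (n+1)) (h' : n ≤ n + 1)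
    (hd4' : ∀ n (x x' : ι n) y, d n x y ≤ dist x x' + d n x' y) :
    delC d h' x y = d n x y := by
  rw [delC_succ d (le_refl n)]
  apply le_antisymm
  · refine csInf_le (delC_bdd d hne hd0 (le_refl n) x y) ⟨x, ?_⟩
    dsimp only
    rw [delC_self, dist_self, zero_add]
  · refine le_csInf (have := hne n; Set.range_nonempty _) ?_
    rintro b ⟨w, rfl⟩
    dsimp only
    rw [delC_self]
    exact hd4' n x w y

end Delta

section SDel

variable {ι : ℕ → Type*} [∀ n, MetricSpace (ι n)] (d : ∀ n, ι n → ι (n+1) → ℝ)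

/-- symmetric version of `delC` between any two levels -/
noncomputable def sdel (n m : ℕ) : ι n → ι m → ℝ :=
  if h : n ≤ m then fun x y => delC d h x y
  else fun x y => delC d (Nat.le_of_lt (Nat.lt_of_not_le h)) y x

lemma sdel_of_le {n m : ℕ} (h : n ≤ m) (x : ι n) (y : ι m) :
    sdel d n m x y = delC d h x y := by
  unfold sdel
  rw [dif_pos h]

lemma sdel_of_ge {n m : ℕ} (h : m ≤ n) (x : ι n) (y : ι m) :
    sdel d n m x y = delC d h y x := by
  unfold sdel
  split_ifs with h'
  · obtain rfl := Nat.le_antisymm h' h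
    exact (delC_self d x y).trans ((dist_comm x y).trans (delC_self d y x).symm)
  · rfl

variable (hne : ∀ n, Nonempty (ι n))
  (hd0 : ∀ n x y, 0 ≤ d n x y)
  (hd2 : ∀ n (x x' : ι n) y, dist x x' ≤ d n x y + d n x' y)
  (hd3 : ∀ n (x : ι n) y y', dist y y' ≤ d n x y + d n x y')
  (hd4 : ∀ n (x x' : ι n) y, d n x y ≤ dist x x' + d n x' y)
  (hd5 : ∀ n (x : ι n) y y', d n x y ≤ d n x y' + dist y' y)

include hne hd0 hd5 in
lemma sdel_lip (n m : ℕ) (x x' : ι n) (y : ι m) :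
    sdel d n m x y ≤ dist x x' + sdel d n m x' y := by
  by_cases h : n ≤ m
  · rw [sdel_of_le d h, sdel_of_le d h]
    exact delC_lip_left d hne hd0 h x x' y
  · have h' : m ≤ n := le_of_not_ge h
    rw [sdel_of_ge d h', sdel_of_ge d h']
    have := delC_lip_right d hne hd0 hd5 h' y x x'
    have e : dist x' x = dist x x' := dist_comm x' x
    linarith

include hne hd0 hd2 hd3 hd4 hd5 in
lemma sdel_step (n m : ℕ) (x : ι n) (y : ι (n+1)) (q : ι m) :
    sdel d (n+1) m y q ≤ d n x y + sdel d n m x q ∧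
    sdel d n m x q ≤ d n x y + sdel d (n+1) m y q := by
  rcases le_or_gt (n+1) m with h | h
  · have hn : n ≤ m := le_trans (Nat.le_succ n) h
    rw [sdel_of_le d h, sdel_of_le d hn]
    constructor
    · refine le_of_forall_pos_le_add fun ε hε => ?_
      obtain ⟨w, hw⟩ := delC_split d hne hd0 (Nat.le_succ n) h x q ε hε
      have e : delC d ((Nat.le_succ n).trans h) x q = delC d hn x q := rfl
      rw [e] at hw
      have l1 : delC d h y q ≤ dist y w + delC d h w q := delC_lip_left d hne hd0 h y w q
      have l2 : dist y w ≤ d n x y + d n x w := hd3 n x y w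
      have l3 : delC d (Nat.le_succ n) x w = d n x w := delC_one d hne hd0 n x w _ hd4
      linarith
    · have ht := delC_trans d hne hd0 hd5 (Nat.le_succ n) h x y q
      have e : delC d ((Nat.le_succ n).trans h) x q = delC d hn x q := rfl
      rw [e] at ht
      have l3 : delC d (Nat.le_succ n) x y = d n x y := delC_one d hne hd0 n x y _ hd4
      linarith
  · have hm : m ≤ n := Nat.lt_succ_iff.mp h
    have hm' : m ≤ n + 1 := hm.trans (Nat.le_succ n)
    rw [sdel_of_ge d hm', sdel_of_ge d hm]
    rw [delC_succ d hm hm' q y]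
    constructor
    · have := csInf_le (delC_bdd d hne hd0 hm q y) ⟨x, rfl⟩
      dsimp only at this
      linarith
    · have key : delC d hm q x - d n x y ≤
          sInf (Set.range fun w : ι n => delC d hm q w + d n w y) := by
        refine le_csInf (have := hne n; Set.range_nonempty _) ?_
        rintro b ⟨w, rfl⟩
        dsimp only
        have l1 := hd2 n w x y
        have l2 : delC d hm q x ≤ delC d hm q w + dist w x :=
          delC_lip_right d hne hd0 hd5 hm q x w
        linarith
      linarith

include hne hd0 hd2 hd3 hd4 hd5 in
lemma sdel_base (b : ι 0) (n m : ℕ) (x : ι n) (q : ι m) :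
    sdel d n m x q ≤ delC d (Nat.zero_le n) b x + sdel d 0 m b q ∧
    sdel d 0 m b q ≤ delC d (Nat.zero_le n) b x + sdel d n m x q := by
  rw [sdel_of_le d (Nat.zero_le m)]
  by_cases h : n ≤ m
  · rw [sdel_of_le d h]
    constructor
    · refine le_of_forall_pos_le_add fun ε hε => ?_
      obtain ⟨w, hw⟩ := delC_split d hne hd0 (Nat.zero_le n) h b q ε hε
      have e : delC d ((Nat.zero_le n).trans h) b q = delC d (Nat.zero_le m) b q := rfl
      rw [e] at hw
      have l1 : delC d h x q ≤ dist x w + delC d h w q := delC_lip_left d hne hd0 h x w q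
      have l2 : dist x w ≤ delC d (Nat.zero_le n) b x + delC d (Nat.zero_le n) b w :=
        delC_two_right d hne hd0 hd3 hd4 (Nat.zero_le n) b x w
      linarith
    · have ht := delC_trans d hne hd0 hd5 (Nat.zero_le n) h b x q
      have e : delC d ((Nat.zero_le n).trans h) b q = delC d (Nat.zero_le m) b q := rfl
      rw [e] at ht
      linarith
  · have hm : m ≤ n := le_of_not_ge h
    rw [sdel_of_ge d hm]
    constructor
    · refine le_of_forall_pos_le_add fun ε hε => ?_
      obtain ⟨w, hw⟩ := delC_split d hne hd0 (Nat.zero_le m) hm b x ε hε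
      have e : delC d ((Nat.zero_le m).trans hm) b x = delC d (Nat.zero_le n) b x := rfl
      rw [e] at hw
      have l1 : delC d hm q x ≤ dist q w + delC d hm w x := delC_lip_left d hne hd0 hm q w x
      have l2 : dist q w ≤ delC d (Nat.zero_le m) b q + delC d (Nat.zero_le m) b w :=
        delC_two_right d hne hd0 hd3 hd4 (Nat.zero_le m) b q w
      linarith
    · refine le_of_forall_pos_le_add fun ε hε => ?_
      obtain ⟨w, hw⟩ := delC_split d hne hd0 (Nat.zero_le m) hm b x ε hε
      have e : delC d ((Nat.zero_le m).trans hm) b x = delC d (Nat.zero_le n) b x := rfl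
      rw [e] at hw
      have l1 : delC d (Nat.zero_le m) b q ≤ delC d (Nat.zero_le m) b w + dist w q :=
        delC_lip_right d hne hd0 hd5 (Nat.zero_le m) b q w
      have l2 : dist w q ≤ delC d hm w x + delC d hm q x :=
        delC_two_left d hne hd0 hd2 hd5 hm w q x
      linarith

end SDel

section JMap

variable {ι : ℕ → Type*} [∀ n, MetricSpace (ι n)] (d : ∀ n, ι n → ι (n+1) → ℝ)
  (hne : ∀ n, Nonempty (ι n))
  (hd0 : ∀ n x y, 0 ≤ d n x y)
  (hd2 : ∀ n (x x' : ι n) y, dist x x' ≤ d n x y + d n x' y)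
  (hd3 : ∀ n (x : ι n) y y', dist y y' ≤ d n x y + d n x y')
  (hd4 : ∀ n (x x' : ι n) y, d n x y ≤ dist x x' + d n x' y)
  (hd5 : ∀ n (x : ι n) y y', d n x y ≤ d n x y' + dist y' y)
  (p : ∀ m, ℕ → ι m) (b : ι 0)

include hne hd0 hd2 hd3 hd4 hd5 in
lemma jmap_bound (n : ℕ) (x : ι n) (q : ℕ × ℕ) :
    |sdel d n q.1 x (p q.1 q.2) - delC d (Nat.zero_le q.1) b (p q.1 q.2)|
      ≤ delC d (Nat.zero_le n) b x := by
  obtain ⟨g1, g2⟩ := sdel_base d hne hd0 hd2 hd3 hd4 hd5 b n q.1 x (p q.1 q.2)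
  rw [sdel_of_le d (Nat.zero_le q.1)] at g1 g2
  rw [abs_le]
  constructor <;> linarith

noncomputable def jmap (hne : ∀ n, Nonempty (ι n))
    (hd0 : ∀ n x y, 0 ≤ d n x y)
    (hd2 : ∀ n (x x' : ι n) y, dist x x' ≤ d n x y + d n x' y)
    (hd3 : ∀ n (x : ι n) y y', dist y y' ≤ d n x y + d n x y')
    (hd4 : ∀ n (x x' : ι n) y, d n x y ≤ dist x x' + d n x' y)
    (hd5 : ∀ n (x : ι n) y y', d n x y ≤ d n x y' + dist y' y)
    (n : ℕ) (x : ι n) : BoundedContinuousFunction (ℕ × ℕ) ℝ :=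
  ⟨⟨fun q => sdel d n q.1 x (p q.1 q.2) - delC d (Nat.zero_le q.1) b (p q.1 q.2),
    continuous_of_discreteTopology⟩,
   ⟨2 * delC d (Nat.zero_le n) b x, by
      intro a c
      have h1 := jmap_bound d hne hd0 hd2 hd3 hd4 hd5 p b n x a
      have h2 := jmap_bound d hne hd0 hd2 hd3 hd4 hd5 p b n x c
      simp only [ContinuousMap.coe_mk, Real.dist_eq]
      rw [abs_le] at h1 h2 ⊢
      constructor <;> linarith⟩⟩

lemma jmap_apply (n : ℕ) (x : ι n) (q : ℕ × ℕ) :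
    jmap d p b hne hd0 hd2 hd3 hd4 hd5 n x q =
      sdel d n q.1 x (p q.1 q.2) - delC d (Nat.zero_le q.1) b (p q.1 q.2) := rfl

lemma jmap_isometry (hp : ∀ m, DenseRange (p m)) (n : ℕ) (x x' : ι n) :
    dist (jmap d p b hne hd0 hd2 hd3 hd4 hd5 n x) (jmap d p b hne hd0 hd2 hd3 hd4 hd5 n x')
      = dist x x' := by
  apply le_antisymm
  · rw [BoundedContinuousFunction.dist_le dist_nonneg]
    intro q
    rw [Real.dist_eq, jmap_apply, jmap_apply]
    have l1 := sdel_lip d hne hd0 hd5 n q.1 x x' (p q.1 q.2)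
    have l2 := sdel_lip d hne hd0 hd5 n q.1 x' x (p q.1 q.2)
    have e : dist x' x = dist x x' := dist_comm x' x
    rw [abs_le]
    constructor <;> linarith
  · refine le_of_forall_pos_le_add fun ε hε => ?_
    obtain ⟨i, hi⟩ := (hp n).exists_dist_lt x' (half_pos hε)
    have hcoord := BoundedContinuousFunction.dist_coe_le_dist
      (f := jmap d p b hne hd0 hd2 hd3 hd4 hd5 n x)
      (g := jmap d p b hne hd0 hd2 hd3 hd4 hd5 n x') ((n, i))
    rw [Real.dist_eq, jmap_apply, jmap_apply] at hcoord
    have ex : sdel d n (n, i).1 x (p (n, i).1 (n, i).2) = dist x (p n i) := by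
      rw [sdel_of_le d (le_refl n), delC_self]
    have ex' : sdel d n (n, i).1 x' (p (n, i).1 (n, i).2) = dist x' (p n i) := by
      rw [sdel_of_le d (le_refl n), delC_self]
    rw [ex, ex'] at hcoord
    have ee : dist x (p n i) - delC d (Nat.zero_le (n, i).1) b (p (n, i).1 (n, i).2) -
        (dist x' (p n i) - delC d (Nat.zero_le (n, i).1) b (p (n, i).1 (n, i).2)) =
        dist x (p n i) - dist x' (p n i) := by ring
    rw [ee] at hcoord
    have habs := le_abs_self (dist x (p n i) - dist x' (p n i))
    have htri : dist x x' ≤ dist x (p n i) + dist x' (p n i) := by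
      have := dist_triangle x (p n i) x'
      have e2 : dist (p n i) x' = dist x' (p n i) := dist_comm _ _
      linarith
    linarith

lemma jmap_step (n : ℕ) (x : ι n) (y : ι (n+1)) :
    dist (jmap d p b hne hd0 hd2 hd3 hd4 hd5 n x) (jmap d p b hne hd0 hd2 hd3 hd4 hd5 (n+1) y)
      ≤ d n x y := by
  rw [BoundedContinuousFunction.dist_le (hd0 n x y)]
  intro q
  obtain ⟨s1, s2⟩ := sdel_step d hne hd0 hd2 hd3 hd4 hd5 n q.1 x y (p q.1 q.2)
  rw [Real.dist_eq, jmap_apply, jmap_apply, abs_le]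
  constructor <;> linarith

end JMap



/-- A bundled `L`-labeled compact metric space: a compact metric space together with a
labeling `L → carrier`. -/
structure LabeledSpace (L : Type*) where
  carrier : Type*
  [ms : MetricSpace carrier]
  [cs : CompactSpace carrier]
  label : L → carrier

attribute [instance] LabeledSpace.ms LabeledSpace.cs

abbrev WS : Type := BoundedContinuousFunction (ℕ × ℕ) ℝ

theorem aux_limit {L : Type*} [Nonempty L] (C : ℕ → LabeledSpace L)
    (D : ∀ n, ((C n).carrier ⊕ (C (n+1)).carrier) → ((C n).carrier ⊕ (C (n+1)).carrier) → ℝ)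
    (hD : ∀ n, IsAdmissible (C n).label (C (n+1)).label ((1/2:ℝ)^n) (D n)) :
    ∃ B : LabeledSpace L, ∀ n, ∃ D',
      IsAdmissible (C n).label B.label (2 * (1/2:ℝ)^n) D' := by
  classical
  have hne : ∀ n, Nonempty (C n).carrier := fun n => ⟨(C n).label (Classical.arbitrary L)⟩
  set d : ∀ n, (C n).carrier → (C (n+1)).carrier → ℝ :=
    fun n x y => D n (.inl x) (.inr y) with hdDef
  have hd0 : ∀ n (x : (C n).carrier) (y : (C (n+1)).carrier), 0 ≤ d n x y :=
    fun n x y => adm_nonneg (hD n) _ _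
  have hd2 : ∀ n (x x' : (C n).carrier) y, dist x x' ≤ d n x y + d n x' y := by
    intro n x x' y
    show dist x x' ≤ D n (.inl x) (.inr y) + D n (.inl x') (.inr y)
    obtain ⟨h1, h2, h3, h4, h5, h6, h7, h8⟩ := hD n
    have t := h3 (.inl x) (.inr y) (.inl x')
    have e := h4 x x'
    have s := h2 (.inr y) (.inl x')
    linarith
  have hd3 : ∀ n (x : (C n).carrier) y y', dist y y' ≤ d n x y + d n x y' := by
    intro n x y y'
    show dist y y' ≤ D n (.inl x) (.inr y) + D n (.inl x) (.inr y')
    obtain ⟨h1, h2, h3, h4, h5, h6, h7, h8⟩ := hD n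
    have t := h3 (.inr y) (.inl x) (.inr y')
    have e := h5 y y'
    have s := h2 (.inr y) (.inl x)
    linarith
  have hd4 : ∀ n (x x' : (C n).carrier) y, d n x y ≤ dist x x' + d n x' y := by
    intro n x x' y
    show D n (.inl x) (.inr y) ≤ dist x x' + D n (.inl x') (.inr y)
    obtain ⟨h1, h2, h3, h4, h5, h6, h7, h8⟩ := hD n
    have t := h3 (.inl x) (.inl x') (.inr y)
    have e := h4 x x'
    linarith
  have hd5 : ∀ n (x : (C n).carrier) y y', d n x y ≤ d n x y' + dist y' y := by
    intro n x y y'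
    show D n (.inl x) (.inr y) ≤ D n (.inl x) (.inr y') + dist y' y
    obtain ⟨h1, h2, h3, h4, h5, h6, h7, h8⟩ := hD n
    have t := h3 (.inl x) (.inr y') (.inr y)
    have e := h5 y' y
    linarith
  have hH1 : ∀ n (x : (C n).carrier), ∀ ε > (0:ℝ), ∃ y, d n x y ≤ (1/2:ℝ)^n + ε :=
    fun n => (hD n).2.2.2.2.2.1
  have hH2 : ∀ n (y : (C (n+1)).carrier), ∀ ε > (0:ℝ), ∃ x, d n x y ≤ (1/2:ℝ)^n + ε :=
    fun n => (hD n).2.2.2.2.2.2.1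
  have hLab : ∀ n ℓ, d n ((C n).label ℓ) ((C (n+1)).label ℓ) ≤ (1/2:ℝ)^n :=
    fun n => (hD n).2.2.2.2.2.2.2
  -- dense sequences
  have hsep : ∀ m, ∃ u : ℕ → (C m).carrier, DenseRange u := fun m =>
    have := hne m
    TopologicalSpace.exists_dense_seq _
  choose p hp using hsep
  set b : (C 0).carrier := (C 0).label (Classical.arbitrary L) with hb
  -- the isometric embeddings into a common complete space
  set j : ∀ n, (C n).carrier → WS :=
    fun n x => jmap d p b hne hd0 hd2 hd3 hd4 hd5 n x with hj
  have jiso : ∀ n (x x' : (C n).carrier), dist (j n x) (j n x') = dist x x' :=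
    fun n x x' => jmap_isometry d hne hd0 hd2 hd3 hd4 hd5 p b hp n x x'
  have jstep : ∀ n x y, dist (j n x) (j (n+1) y) ≤ d n x y :=
    fun n x y => jmap_step d hne hd0 hd2 hd3 hd4 hd5 p b n x y
  have jcont : ∀ n, Continuous (j n) := fun n =>
    (Isometry.of_dist_eq (jiso n)).continuous
  -- the compact images
  set K : ℕ → TopologicalSpace.NonemptyCompacts WS :=
    fun n => ⟨⟨Set.range (j n), isCompact_range (jcont n)⟩,
      (hne n).elim fun x => ⟨j n x, ⟨x, rfl⟩⟩⟩ with hKdef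
  have hKdist : ∀ n, dist (K n) (K (n+1)) ≤ (1/2:ℝ)^n := by
    intro n
    rw [NonemptyCompacts.dist_eq]
    refine le_of_forall_pos_le_add fun ε hε => ?_
    refine hausdorffDist_le_of_mem_dist (by positivity) ?_ ?_
    · rintro w ⟨x, rfl⟩
      obtain ⟨y, hy⟩ := hH1 n x ε hε
      exact ⟨j (n+1) y, ⟨y, rfl⟩, (jstep n x y).trans hy⟩
    · rintro w ⟨y, rfl⟩
      obtain ⟨x, hx⟩ := hH2 n y ε hε
      exact ⟨j n x, ⟨x, rfl⟩, by rw [dist_comm]; exact (jstep n x y).trans hx⟩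
  have epow : ∀ k : ℕ, ((1:ℝ)/2)^k = 2/2/2^k := by
    intro k; rw [div_pow, one_pow]; norm_num
  have epow2 : ∀ k : ℕ, (2:ℝ)/2^k = 2*(1/2:ℝ)^k := by
    intro k; rw [div_pow, one_pow]; ring
  have hcau : CauchySeq K :=
    cauchySeq_of_le_geometric_two (C := 2) (fun n => by rw [← epow]; exact hKdist n)
  obtain ⟨Klim, hKlim⟩ := cauchySeq_tendsto_of_complete hcau
  have hKd : ∀ n, dist (K n) Klim ≤ 2 * (1/2:ℝ)^n := by
    intro n
    have := dist_le_of_le_geometric_two_of_tendsto (C := 2)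
      (fun k => by rw [← epow]; exact hKdist k) hKlim n
    rw [epow2 n] at this
    exact this
  -- limits of the labels
  have hlabc : ∀ ℓ, ∃ z, Tendsto (fun n => j n ((C n).label ℓ)) atTop (𝓝 z) := by
    intro ℓ
    apply cauchySeq_tendsto_of_complete
    apply cauchySeq_of_le_geometric_two (C := 2)
    intro n
    rw [← epow]
    exact (jstep n _ _).trans (hLab n ℓ)
  choose wl hwl using hlabc
  have hwd : ∀ ℓ n, dist (j n ((C n).label ℓ)) (wl ℓ) ≤ 2 * (1/2:ℝ)^n := by
    intro ℓ n
    have := dist_le_of_le_geometric_two_of_tendsto (C := 2)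
      (fun k => by rw [← epow]; exact (jstep k _ _).trans (hLab k ℓ)) (hwl ℓ) n
    rw [epow2 n] at this
    exact this
  -- the labels belong to the limit set
  have hfin : ∀ n, EMetric.hausdorffEdist (K n : Set WS) (Klim : Set WS) ≠ ⊤ := fun n =>
    hausdorffEdist_ne_top_of_nonempty_of_bounded (K n).nonempty Klim.nonempty
      (K n).isCompact.isBounded Klim.isCompact.isBounded
  have hmem : ∀ ℓ, wl ℓ ∈ (Klim : Set WS) := by
    intro ℓ
    rw [IsClosed.mem_iff_infDist_zero Klim.isCompact.isClosed Klim.nonempty]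
    refine le_antisymm ?_ infDist_nonneg
    refine le_of_forall_pos_le_add fun ε hε => ?_
    obtain ⟨k, hk⟩ := exists_pow_lt_of_lt_one (by positivity : (0:ℝ) < ε/4)
      (by norm_num : (1/2:ℝ) < 1)
    have l1 : infDist (wl ℓ) (Klim : Set WS) ≤
        infDist (j k ((C k).label ℓ)) (Klim : Set WS) + dist (wl ℓ) (j k ((C k).label ℓ)) :=
      infDist_le_infDist_add_dist
    have l2 : infDist (j k ((C k).label ℓ)) (Klim : Set WS) ≤
        infDist (j k ((C k).label ℓ)) (K k : Set WS) +
          hausdorffDist (K k : Set WS) (Klim : Set WS) :=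
      infDist_le_infDist_add_hausdorffDist (hfin k)
    have l3 : infDist (j k ((C k).label ℓ)) (K k : Set WS) = 0 :=
      infDist_zero_of_mem ⟨_, rfl⟩
    have l4 : hausdorffDist (K k : Set WS) (Klim : Set WS) ≤ 2*(1/2:ℝ)^k := by
      rw [← NonemptyCompacts.dist_eq]; exact hKd k
    have l5 := hwd ℓ k
    have l6 : dist (wl ℓ) (j k ((C k).label ℓ)) = dist (j k ((C k).label ℓ)) (wl ℓ) :=
      dist_comm _ _
    linarith
  haveI hcs : CompactSpace (Klim : Set WS) := isCompact_iff_compactSpace.mp Klim.isCompact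
  refine ⟨LabeledSpace.mk (ULift ↥(Klim : Set WS)) (fun ℓ => ⟨⟨wl ℓ, hmem ℓ⟩⟩), ?_⟩
  intro n
  have hlt : ∀ ε > (0:ℝ), hausdorffDist (K n : Set WS) (Klim : Set WS) < 2*(1/2:ℝ)^n + ε := by
    intro ε hε
    have := hKd n
    rw [NonemptyCompacts.dist_eq] at this
    linarith
  have eK : ∀ a b : ULift ↥(Klim : Set WS), dist a b = dist (a.down : WS) (b.down : WS) :=
    fun a b => rfl
  refine ⟨fun p q => match p, q with
    | .inl x, .inl x' => dist x x'
    | .inl x, .inr k => dist (j n x) (k.down : WS)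
    | .inr k, .inl x => dist (j n x) (k.down : WS)
    | .inr k, .inr k' => dist k k', ?_, ?_, ?_, fun _ _ => rfl, fun _ _ => rfl, ?_, ?_, ?_⟩
  · rintro (x | k) <;> simp
  · rintro (x | k) (x' | k') <;> simp [dist_comm]
  · rintro (x | k) (x' | k') (x'' | k'') <;> simp only
    · exact dist_triangle _ _ _
    · rw [← jiso n x x']
      exact dist_triangle _ _ _
    · rw [← jiso n x x'']
      exact dist_triangle_right _ _ _
    · rw [eK k' k'']
      exact dist_triangle _ _ _
    · rw [← jiso n x' x'']
      have t := dist_triangle (j n x'') (j n x') (k.down : WS)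
      have e := dist_comm (j n x'') (j n x')
      linarith
    · rw [eK k k'']
      exact dist_triangle_left _ _ _
    · rw [eK k k']
      have t := dist_triangle (j n x'') (k'.down : WS) (k.down : WS)
      have e := dist_comm (k'.down : WS) (k.down : WS)
      linarith
    · rw [eK k k', eK k' k'', eK k k'']
      exact dist_triangle _ _ _
  · intro x ε hε
    have hmemK : j n x ∈ (K n : Set WS) := ⟨x, rfl⟩
    obtain ⟨z, hz, hzd⟩ := exists_dist_lt_of_hausdorffDist_lt hmemK (hlt ε hε) (hfin n)
    exact ⟨⟨⟨z, hz⟩⟩, hzd.le⟩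
  · intro k ε hε
    obtain ⟨w, ⟨x, rfl⟩, hw⟩ := exists_dist_lt_of_hausdorffDist_lt' k.down.2 (hlt ε hε) (hfin n)
    exact ⟨x, hw.le⟩
  · intro ℓ
    exact hwd ℓ n

/-- The space of `L`-labeled compact metric spaces is complete: every sequence that is
Cauchy with respect to the labeled Gromov–Hausdorff distance converges to some
`L`-labeled compact metric space. -/
theorem stmt2 {L : Type*} (A : ℕ → LabeledSpace L)
    (hcauchy : ∀ ε > (0 : ℝ), ∃ N : ℕ, ∀ n ≥ N, ∀ m ≥ N,
      lghDist (A n).label (A m).label < ε) :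
    ∃ B : LabeledSpace L,
      Filter.Tendsto (fun n => lghDist (A n).label B.label) Filter.atTop (nhds 0) := by
  classical
  by_cases hL : Nonempty L
  · haveI := hL
    have hc : ∀ k : ℕ, ∃ N : ℕ, ∀ n ≥ N, ∀ m ≥ N,
        lghDist (A n).label (A m).label < (1/2:ℝ)^k :=
      fun k => hcauchy _ (by positivity)
    choose N hN using hc
    set u : ℕ → ℕ := fun k => Nat.rec (N 0) (fun k uk => max (N (k+1)) (uk + 1)) k with hu
    have hu0 : ∀ k, N k ≤ u k := by
      intro k
      cases k with
      | zero => exact le_refl _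
      | succ k => exact le_max_left _ _
    have hu1 : ∀ k, u k + 1 ≤ u (k+1) := fun k => le_max_right _ _
    have hneA : ∀ n, Nonempty (A n).carrier := fun n => ⟨(A n).label (Classical.arbitrary L)⟩
    have hadm : ∀ (a b2 : ℕ) (k : ℕ), lghDist (A a).label (A b2).label < (1/2:ℝ)^k →
        ∃ dd, IsAdmissible (A a).label (A b2).label ((1/2:ℝ)^k) dd := by
      intro a b2 k hlt
      haveI := hneA a
      haveI := hneA b2
      obtain ⟨t0, ht0, d0, hd0⟩ := exists_adm (A a).label (A b2).label
      have hSne : {t : ℝ | 0 ≤ t ∧ ∃ dd, IsAdmissible (A a).label (A b2).label t dd}.Nonempty :=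
        ⟨t0, ht0, d0, hd0⟩
      have hlt2 : sInf {t : ℝ | 0 ≤ t ∧ ∃ dd, IsAdmissible (A a).label (A b2).label t dd}
          < (1/2:ℝ)^k := hlt
      obtain ⟨t, ⟨htnn, dd, hdd⟩, htlt⟩ := exists_lt_of_csInf_lt hSne hlt2
      exact ⟨dd, adm_mono hdd htlt.le⟩
    have hcons : ∀ k, ∃ dd,
        IsAdmissible (A (u k)).label (A (u (k+1))).label ((1/2:ℝ)^k) dd := by
      intro k
      apply hadm
      exact hN k (u k) (hu0 k) (u (k+1))
        (le_trans (hu0 k) (le_trans (Nat.le_succ _) (hu1 k)))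
    choose DD hDD using hcons
    obtain ⟨B, hB⟩ := aux_limit (fun k => A (u k)) DD hDD
    refine ⟨B, ?_⟩
    rw [Metric.tendsto_atTop]
    intro ε hε
    obtain ⟨k, hk⟩ := exists_pow_lt_of_lt_one (show (0:ℝ) < ε/3 by linarith)
      (by norm_num : (1/2:ℝ) < 1)
    refine ⟨u k, fun m hm => ?_⟩
    have h1 : lghDist (A m).label (A (u k)).label < (1/2:ℝ)^k :=
      hN k m (le_trans (hu0 k) hm) (u k) (hu0 k)
    obtain ⟨d1, hd1⟩ := hadm m (u k) k h1
    obtain ⟨d2, hd2⟩ := hB k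
    haveI := hneA (u k)
    obtain ⟨Dc, hDc⟩ := adm_comp hd1 hd2
    have hle : lghDist (A m).label B.label ≤ (1/2:ℝ)^k + 2*(1/2:ℝ)^k :=
      lghDist_le (by positivity) hDc
    have hnn := lghDist_nonneg (A m).label B.label
    rw [Real.dist_eq, sub_zero, abs_of_nonneg hnn]
    linarith
  · haveI hLe : IsEmpty L := not_nonempty_iff.mp hL
    refine ⟨LabeledSpace.mk (ULift Empty) (fun ℓ => isEmptyElim ℓ), ?_⟩
    have hzero : ∀ n, lghDist (A n).label
        (LabeledSpace.mk (ULift Empty) (fun ℓ : L => isEmptyElim ℓ)).label = 0 := by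
      intro n
      by_cases hX : Nonempty (A n).carrier
      · have hempty : {t : ℝ | 0 ≤ t ∧ ∃ dd, IsAdmissible (A n).label
            (LabeledSpace.mk (ULift Empty) (fun ℓ : L => isEmptyElim ℓ)).label t dd} = ∅ := by
          rw [Set.eq_empty_iff_forall_notMem]
          rintro t ⟨ht, dd, h⟩
          obtain ⟨y, -⟩ := h.2.2.2.2.2.1 (Classical.arbitrary _) 1 one_pos
          exact y.down.elim
        show sInf _ = 0
        rw [hempty, Real.sInf_empty]
      · haveI : IsEmpty (A n).carrier := not_nonempty_iff.mp hX
        have hset : {t : ℝ | 0 ≤ t ∧ ∃ dd, IsAdmissible (A n).label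
            (LabeledSpace.mk (ULift Empty) (fun ℓ : L => isEmptyElim ℓ)).label t dd} = Set.Ici 0 := by
          apply Set.eq_of_subset_of_subset
          · rintro t ⟨ht, -⟩
            exact ht
          · intro t ht
            exact ⟨ht, fun _ _ => 0, fun p => isEmptyElim p, fun p q => isEmptyElim p,
              fun p q r => isEmptyElim p, fun x x' => isEmptyElim x, fun y y' => isEmptyElim y,
              fun x => isEmptyElim x, fun y => isEmptyElim y, fun ℓ => isEmptyElim ℓ⟩
        show sInf _ = 0
        rw [hset, csInf_Ici]
    have heq : (fun n => lghDist (A n).label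
        (LabeledSpace.mk (ULift Empty) (fun ℓ : L => isEmptyElim ℓ)).label) = fun _ : ℕ => (0:ℝ) :=
      funext hzero
    rw [heq]
    exact tendsto_const_nhds
end

section
/- Let L be a set and let (X,α) be an L-labeled metric space. Then there exists a sequence ((X_n, α_n))_{n∈ℕ} of L-labeled metric spaces, each X_n a finite metric space whose metric takes only rational values, such that d^L_GH(X_n,α_n;X,α) → 0 as n → ∞. -/
open Filter Topology Metric Set

/-! The finite spaces are `1/(n+1)`-nets of `X` whose metric is rounded up to the grid
`ℤ/(n+1)`. Rounding up is monotone and subadditive, so it keeps the triangle inequality, and it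
moves distances by at most `1/(n+1)`. The net can therefore be glued to `X` (Mathlib's
`Metric.glueDist`) so that each net point lies at distance `1/(n+1)` from its original; with the
covering radius this bounds the labeled distance by `2/(n+1)`. -/

noncomputable def roundUp (m : ℕ) (x : ℝ) : ℝ := ⌈x * (m + 1)⌉ / (m + 1)

section roundUp

variable (m : ℕ)

lemma le_roundUp (x : ℝ) : x ≤ roundUp m x := by
  rw [roundUp, le_div_iff₀ (by positivity)]
  exact Int.le_ceil _

lemma roundUp_le (x : ℝ) : roundUp m x ≤ x + 1 / (m + 1) := by
  rw [roundUp, div_le_iff₀ (by positivity), add_mul, one_div_mul_cancel (by positivity)]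
  exact (Int.ceil_lt_add_one _).le

lemma abs_roundUp_sub_le (x : ℝ) : |roundUp m x - x| ≤ 1 / (m + 1) := by
  have : (0 : ℝ) < 1 / (m + 1) := by positivity
  exact abs_sub_le_iff.2 ⟨by linarith [roundUp_le m x], by linarith [le_roundUp m x]⟩

lemma roundUp_zero : roundUp m 0 = 0 := by
  simp [roundUp]

lemma roundUp_mono : Monotone (roundUp m) := fun x y hxy => by
  unfold roundUp
  gcongr

lemma roundUp_add_le (x y : ℝ) : roundUp m (x + y) ≤ roundUp m x + roundUp m y := by
  simp only [roundUp, add_mul, ← add_div]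
  gcongr
  exact_mod_cast Int.ceil_add_le _ _

lemma exists_rat_eq_roundUp (x : ℝ) : ∃ q : ℚ, roundUp m x = q :=
  ⟨⌈x * (m + 1)⌉ / (m + 1), by simp [roundUp]⟩

end roundUp

@[reducible] noncomputable def roundedMetric {α X : Type*} [MetricSpace X] (m : ℕ) (f : α → X)
    (hf : Function.Injective f) : MetricSpace α where
  dist a b := roundUp m (dist (f a) (f b))
  dist_self a := by simp only [dist_self, roundUp_zero]
  dist_comm a b := by simp only [dist_comm]
  dist_triangle a b c := (roundUp_mono m (dist_triangle _ _ _)).trans (roundUp_add_le m _ _)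
  eq_of_dist_eq_zero {a b} h := hf <| dist_le_zero.1 <| h ▸ le_roundUp m _

section LabeledDist

variable {L X Y : Type*} [MetricSpace X] [MetricSpace Y] {α : L → X} {β : L → Y}
  {t : ℝ} {d : X ⊕ Y → X ⊕ Y → ℝ}

lemma lghDist_nonneg_s3 : 0 ≤ lghDist α β :=
  Real.sInf_nonneg fun _ ht => ht.1

lemma lghDist_le_of_isAdmissible (ht : 0 ≤ t) (h : IsAdmissible α β t d) : lghDist α β ≤ t :=
  csInf_le ⟨0, fun _ hs => hs.1⟩ ⟨ht, d, h⟩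

lemma isAdmissible_of_isEmpty [IsEmpty X] [IsEmpty Y] (α : L → X) (β : L → Y) (t : ℝ)
    (d : X ⊕ Y → X ⊕ Y → ℝ) : IsAdmissible α β t d := by
  refine ⟨?_, ?_, ?_, ?_, ?_, ?_, ?_, ?_⟩ <;> intro p <;>
    first | exact isEmptyElim p | exact isEmptyElim (α p)

lemma glueDist_inl_inr_le {Z : Type*} (Φ : Z → X) (Ψ : Z → Y) (ε : ℝ) (x : X) (y : Y) (z : Z) :
    glueDist Φ Ψ ε (.inl x) (.inr y) ≤ dist x (Φ z) + dist y (Ψ z) + ε := by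
  exact add_le_add_left (ciInf_le ⟨0, forall_mem_range.2 fun _ => by positivity⟩ z) ε

lemma isAdmissible_glueDist {Z : Type*} [Nonempty Z] {Φ : Z → X} {Ψ : Z → Y} {ε r : ℝ}
    (hε : 0 < ε) (H : ∀ p q, |dist (Φ p) (Φ q) - dist (Ψ p) (Ψ q)| ≤ 2 * ε)
    (hΦ : ∀ x, ∃ z, dist x (Φ z) ≤ r) (hΨ : ∀ y, ∃ z, dist y (Ψ z) ≤ r)
    (hlabel : ∀ ℓ, ∃ z, dist (α ℓ) (Φ z) + dist (β ℓ) (Ψ z) ≤ r) :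
    IsAdmissible α β (r + ε) (glueDist Φ Ψ ε) := by
  let := glueMetricApprox Φ Ψ ε hε H
  refine ⟨dist_self, dist_comm, dist_triangle, fun _ _ => rfl, fun _ _ => rfl, ?_, ?_, ?_⟩
  · intro x δ hδ
    obtain ⟨z, hz⟩ := hΦ x
    refine ⟨Ψ z, (glueDist_inl_inr_le Φ Ψ ε x _ z).trans ?_⟩
    linarith [dist_self (Ψ z)]
  · intro y δ hδ
    obtain ⟨z, hz⟩ := hΨ y
    refine ⟨Φ z, (glueDist_inl_inr_le Φ Ψ ε _ y z).trans ?_⟩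
    linarith [dist_self (Φ z)]
  · intro ℓ
    obtain ⟨z, hz⟩ := hlabel ℓ
    exact (glueDist_inl_inr_le Φ Ψ ε _ _ z).trans (by linarith)

end LabeledDist

section Approximation

variable {X : Type*} [MetricSpace X]

lemma exists_injective_fin_net [CompactSpace X] {r : ℝ} (hr : 0 < r) :
    ∃ (k : ℕ) (g : Fin k → X), Function.Injective g ∧ ∀ x, ∃ i, dist x (g i) < r := by
  obtain ⟨t, -, ht⟩ :=
    isCompact_univ.elim_nhds_subcover (fun x : X => ball x r) fun x _ => ball_mem_nhds x hr
  refine ⟨_, fun i => t.equivFin.symm i, Subtype.val_injective.comp t.equivFin.symm.injective,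
    fun x => ?_⟩
  obtain ⟨s, hs, hxs⟩ := mem_iUnion₂.1 (ht (mem_univ x))
  exact ⟨t.equivFin ⟨s, hs⟩, by simpa using hxs⟩

universe w

lemma exists_finite_rational_lghDist_le {L : Type*} [CompactSpace X] (α : L → X) (n : ℕ) :
    ∃ A : LabeledSpace.{_, w} L, Finite A.carrier ∧ (∀ x y : A.carrier, ∃ q : ℚ, dist x y = q) ∧
      lghDist A.label α ≤ 2 / (n + 1) := by
  have hδ : (0 : ℝ) < 1 / (n + 1) := by positivity
  obtain ⟨k, g, hg, hnet⟩ := exists_injective_fin_net (X := X) hδ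
  let f : ULift.{w} (Fin k) → X := g ∘ ULift.down
  let := roundedMetric n f (hg.comp ULift.down_injective)
  choose ι hι using hnet
  refine ⟨⟨ULift (Fin k), fun ℓ => ULift.up (ι (α ℓ))⟩, inferInstance,
    fun a b => exists_rat_eq_roundUp n _, ?_⟩
  rcases isEmpty_or_nonempty (ULift.{w} (Fin k)) with hk | hk
  · have : IsEmpty X := ⟨fun x => isEmptyElim (ULift.up.{w} (ι x))⟩
    exact lghDist_le_of_isAdmissible (by positivity) (isAdmissible_of_isEmpty _ _ _ fun _ _ => 0)
  have H (a b : ULift.{w} (Fin k)) : |dist a b - dist (f a) (f b)| ≤ 2 * (1 / (n + 1)) :=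
    (abs_roundUp_sub_le n _).trans (by linarith)
  refine (lghDist_le_of_isAdmissible (by positivity) <|
    isAdmissible_glueDist (Φ := id) (Ψ := f) hδ H (fun a => ⟨a, by simpa using hδ.le⟩)
      (fun x => ⟨ULift.up (ι x), (hι x).le⟩)
      (fun ℓ => ⟨ULift.up (ι (α ℓ)), by simpa [f] using (hι (α ℓ)).le⟩)).trans_eq (by ring)

end Approximation

/-- Every `L`-labeled compact metric space is the labeled Gromov–Hausdorff limit of a
sequence of finite `L`-labeled metric spaces whose metrics take only rational values. -/
theorem stmt3 {L X : Type*} [MetricSpace X] [CompactSpace X] (α : L → X) :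
    ∃ A : ℕ → LabeledSpace L,
      (∀ n, Finite (A n).carrier) ∧
      (∀ n, ∀ x y : (A n).carrier, ∃ q : ℚ, dist x y = (q : ℝ)) ∧
      Filter.Tendsto (fun n => lghDist (A n).label α) Filter.atTop (nhds 0) := by
  choose A hfin hrat hle using exists_finite_rational_lghDist_le α
  refine ⟨A, hfin, hrat, squeeze_zero (fun _ => lghDist_nonneg_s3) hle ?_⟩
  simpa [div_eq_mul_inv] using tendsto_one_div_add_atTop_nhds_zero_nat.const_mul (2 : ℝ)
end

section
/- Let L be a set and let (X,α) and (Y,β) be L-labeled metric spaces. Then d^L_GH(X,α;Y,β) = (1/2) · inf_R dis(R), where the infimum runs over all correspondences R between (X,α) and (Y,β) and dis(R) denotes the distortion of R. -/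
open Filter Topology Metric Set

/-- A correspondence between `(X, α)` and `(Y, β)`: a relation `R ⊆ X × Y` whose
projections to `X` and `Y` are surjective and which relates `α ℓ` to `β ℓ` for every
label `ℓ ∈ L`. -/
def IsCorrespondence {L X Y : Type*} (α : L → X) (β : L → Y) (R : Set (X × Y)) : Prop :=
  (∀ x : X, ∃ y : Y, (x, y) ∈ R) ∧
  (∀ y : Y, ∃ x : X, (x, y) ∈ R) ∧
  (∀ ℓ : L, (α ℓ, β ℓ) ∈ R)

/-- The distortion of a relation `R ⊆ X × Y`:
`sup { |d_X(x,x') − d_Y(y,y')| : (x,y), (x',y') ∈ R }`. -/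
noncomputable def relDistortion {X Y : Type*} [MetricSpace X] [MetricSpace Y]
    (R : Set (X × Y)) : ℝ :=
  sSup {r : ℝ | ∃ p ∈ R, ∃ q ∈ R, r = |dist p.1 q.1 - dist p.2 q.2|}

-- AUX PART, to be inserted before stmt4
section Aux

variable {L X Y : Type*} [MetricSpace X] [MetricSpace Y]

lemma relDistortion_bddAbove [CompactSpace X] [CompactSpace Y] (R : Set (X × Y)) :
    BddAbove {r : ℝ | ∃ p ∈ R, ∃ q ∈ R, r = |dist p.1 q.1 - dist p.2 q.2|} := by
  refine ⟨diam (univ : Set X) + diam (univ : Set Y), ?_⟩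
  rintro r ⟨p, hp, q, hq, rfl⟩
  have h1 := dist_le_diam_of_mem isCompact_univ.isBounded (mem_univ p.1) (mem_univ q.1)
  have h2 := dist_le_diam_of_mem isCompact_univ.isBounded (mem_univ p.2) (mem_univ q.2)
  have h3 : (0:ℝ) ≤ dist p.1 q.1 := dist_nonneg
  have h4 : (0:ℝ) ≤ dist p.2 q.2 := dist_nonneg
  rw [abs_le]; constructor <;> linarith

lemma relDistortion_nonneg [CompactSpace X] [CompactSpace Y] (R : Set (X × Y)) :
    0 ≤ relDistortion R := by
  rcases R.eq_empty_or_nonempty with h | ⟨p, hp⟩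
  · have he : {r : ℝ | ∃ p ∈ R, ∃ q ∈ R, r = |dist p.1 q.1 - dist p.2 q.2|} = ∅ := by
      simp [h]
    rw [relDistortion, he, Real.sSup_empty]
  · exact le_csSup (relDistortion_bddAbove R) ⟨p, hp, p, hp, by simp⟩

lemma abs_dist_sub_le_relDistortion [CompactSpace X] [CompactSpace Y] {R : Set (X × Y)}
    {p q : X × Y} (hp : p ∈ R) (hq : q ∈ R) :
    |dist p.1 q.1 - dist p.2 q.2| ≤ relDistortion R :=
  le_csSup (relDistortion_bddAbove R) ⟨p, hp, q, hq, rfl⟩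

/-- The pseudometric on `X ⊕ Y` glued along a relation `R`. -/
noncomputable def corrGlueDist (R : Set (X × Y)) : X ⊕ Y → X ⊕ Y → ℝ := fun p q =>
  match p, q with
  | .inl x, .inl x' => dist x x'
  | .inl x, .inr y => sInf ((fun p : X × Y => dist x p.1 + relDistortion R / 2 + dist p.2 y) '' R)
  | .inr y, .inl x => sInf ((fun p : X × Y => dist x p.1 + relDistortion R / 2 + dist p.2 y) '' R)
  | .inr y, .inr y' => dist y y'

lemma corrGlueDist_admissible [CompactSpace X] [CompactSpace Y] [Nonempty X] [Nonempty Y]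
    {α : L → X} {β : L → Y} {R : Set (X × Y)} (hR : IsCorrespondence α β R) :
    IsAdmissible α β (relDistortion R / 2) (corrGlueDist R) := by
  obtain ⟨hR1, hR2, hR3⟩ := hR
  have hRne : R.Nonempty := by
    obtain ⟨y, hy⟩ := hR1 (Classical.arbitrary X); exact ⟨_, hy⟩
  set r := relDistortion R with hr
  have hr0 : 0 ≤ r := relDistortion_nonneg R
  set S : X → Y → Set ℝ :=
    fun x y => (fun p : X × Y => dist x p.1 + r / 2 + dist p.2 y) '' R with hS
  have hSne : ∀ x y, (S x y).Nonempty := fun x y => hRne.image _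
  have hSbdd : ∀ x y, BddBelow (S x y) := by
    intro x y
    refine ⟨0, ?_⟩
    rintro s ⟨p, hp, rfl⟩
    have := dist_nonneg (x := x) (y := p.1)
    have := dist_nonneg (x := p.2) (y := y)
    dsimp; linarith
  have hglue : ∀ x y, corrGlueDist R (Sum.inl x) (Sum.inr y) = sInf (S x y) := fun _ _ => rfl
  have hglue' : ∀ x y, corrGlueDist R (Sum.inr y) (Sum.inl x) = sInf (S x y) := fun _ _ => rfl
  have hDle : ∀ x y, ∀ p ∈ R, sInf (S x y) ≤ dist x p.1 + r / 2 + dist p.2 y := by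
    intro x y p hp
    exact csInf_le (hSbdd x y) ⟨p, hp, rfl⟩
  have hdis : ∀ p ∈ R, ∀ q ∈ R, |dist p.1 q.1 - dist p.2 q.2| ≤ r :=
    fun p hp q hq => abs_dist_sub_le_relDistortion hp hq
  -- key inequalities
  have key1 : ∀ x x' y, dist x x' ≤ sInf (S x y) + sInf (S x' y) := by
    intro x x' y
    rw [← sub_le_iff_le_add]
    refine le_csInf (hSne x y) ?_
    rintro s ⟨p, hp, rfl⟩
    rw [sub_le_iff_le_add]
    rw [← sub_le_iff_le_add']
    refine le_csInf (hSne x' y) ?_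
    rintro s' ⟨q, hq, rfl⟩
    have t1 : dist x x' ≤ dist x p.1 + dist p.1 q.1 + dist q.1 x' := by
      calc dist x x' ≤ dist x q.1 + dist q.1 x' := dist_triangle _ _ _
        _ ≤ dist x p.1 + dist p.1 q.1 + dist q.1 x' := by
            have := dist_triangle x p.1 q.1; linarith
    have t2 : dist p.1 q.1 ≤ dist p.2 q.2 + r := by
      have := hdis p hp q hq
      rw [abs_le] at this; linarith [this.2]
    have t3 : dist p.2 q.2 ≤ dist p.2 y + dist y q.2 := dist_triangle _ _ _
    have hc1 : dist q.1 x' = dist x' q.1 := dist_comm _ _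
    have hc2 : dist y q.2 = dist q.2 y := dist_comm _ _
    dsimp
    linarith
  have key2 : ∀ x y y', dist y y' ≤ sInf (S x y) + sInf (S x y') := by
    intro x y y'
    rw [← sub_le_iff_le_add]
    refine le_csInf (hSne x y) ?_
    rintro s ⟨p, hp, rfl⟩
    rw [sub_le_iff_le_add]
    rw [← sub_le_iff_le_add']
    refine le_csInf (hSne x y') ?_
    rintro s' ⟨q, hq, rfl⟩
    have t1 : dist y y' ≤ dist y p.2 + dist p.2 q.2 + dist q.2 y' := by
      calc dist y y' ≤ dist y q.2 + dist q.2 y' := dist_triangle _ _ _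
        _ ≤ dist y p.2 + dist p.2 q.2 + dist q.2 y' := by
            have := dist_triangle y p.2 q.2; linarith
    have t2 : dist p.2 q.2 ≤ dist p.1 q.1 + r := by
      have := hdis p hp q hq
      rw [abs_le] at this; linarith [this.1]
    have t3 : dist p.1 q.1 ≤ dist p.1 x + dist x q.1 := dist_triangle _ _ _
    have hc1 : dist y p.2 = dist p.2 y := dist_comm _ _
    have hc2 : dist p.1 x = dist x p.1 := dist_comm _ _
    have hc3 : dist q.2 y' = dist p.2 y' ∨ True := Or.inr trivial
    dsimp
    linarith [dist_comm q.2 y']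
  have key3 : ∀ x x' y, sInf (S x y) ≤ dist x x' + sInf (S x' y) := by
    intro x x' y
    rw [← sub_le_iff_le_add']
    refine le_csInf (hSne x' y) ?_
    rintro s' ⟨q, hq, rfl⟩
    rw [sub_le_iff_le_add']
    have h1 := hDle x y q hq
    have h2 := dist_triangle x x' q.1
    dsimp
    linarith
  have key4 : ∀ x y y', sInf (S x y) ≤ sInf (S x y') + dist y' y := by
    intro x y y'
    rw [← sub_le_iff_le_add]
    refine le_csInf (hSne x y') ?_
    rintro s' ⟨q, hq, rfl⟩
    rw [sub_le_iff_le_add]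
    have h1 := hDle x y q hq
    have h2 := dist_triangle q.2 y' y
    dsimp
    linarith
  refine ⟨?_, ?_, ?_, fun x x' => rfl, fun y y' => rfl, ?_, ?_, ?_⟩
  · rintro (x | y) <;> simp [corrGlueDist]
  · rintro (x | y) (x' | y') <;> simp [corrGlueDist, dist_comm]
  · rintro (x | y) (x' | y') (x'' | y'')
    · exact dist_triangle x x' x''
    · -- lll is above; this is l l r : sInf (S x y'') ≤ dist x x' + sInf (S x' y'')
      exact key3 x x' y''
    · -- l r l : dist x x'' ≤ sInf (S x y') + sInf (S x'' y')
      exact key1 x x'' y'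
    · -- l r r : sInf (S x y'') ≤ sInf (S x y') + dist y' y''
      exact key4 x y'' y'
    · -- r l l : sInf (S x'' y) ≤ sInf (S x' y) + dist x' x''
      have h := key3 x'' x' y
      have hc := dist_comm x' x''
      show sInf (S x'' y) ≤ sInf (S x' y) + dist x' x''
      linarith
    · -- r l r : dist y y'' ≤ sInf (S x' y) + sInf (S x' y'')
      exact key2 x' y y''
    · -- r r l : sInf (S x'' y) ≤ dist y y' + sInf (S x'' y')
      have h := key4 x'' y y'
      have hc := dist_comm y y'
      show sInf (S x'' y) ≤ dist y y' + sInf (S x'' y')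
      linarith
    · exact dist_triangle y y' y''
  · intro x ε hε
    obtain ⟨y, hy⟩ := hR1 x
    refine ⟨y, ?_⟩
    have := hDle x y (x, y) hy
    simp only [dist_self] at this
    rw [hglue]
    linarith
  · intro y ε hε
    obtain ⟨x, hx⟩ := hR2 y
    refine ⟨x, ?_⟩
    have := hDle x y (x, y) hx
    simp only [dist_self] at this
    rw [hglue]
    linarith
  · intro ℓ
    have := hDle (α ℓ) (β ℓ) (α ℓ, β ℓ) (hR3 ℓ)
    simp only [dist_self] at this
    rw [hglue]
    linarith

end Aux

/-- The labeled Gromov–Hausdorff distance equals half the infimum of the distortions of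
correspondences between `(X, α)` and `(Y, β)`. -/
theorem stmt4 {L X Y : Type*} [MetricSpace X] [CompactSpace X]
    [MetricSpace Y] [CompactSpace Y]
    (α : L → X) (β : L → Y) :
    lghDist α β =
      (1 / 2) * sInf {r : ℝ | ∃ R : Set (X × Y), IsCorrespondence α β R ∧ relDistortion R = r} := by
  set A := {t : ℝ | 0 ≤ t ∧ ∃ d : X ⊕ Y → X ⊕ Y → ℝ, IsAdmissible α β t d} with hA
  set C := {r : ℝ | ∃ R : Set (X × Y), IsCorrespondence α β R ∧ relDistortion R = r} with hC
  have hAbdd : BddBelow A := ⟨0, fun t ht => ht.1⟩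
  have hlgh : lghDist α β = sInf A := rfl
  have hCbdd : BddBelow C := by
    refine ⟨0, ?_⟩
    rintro r ⟨R, hcorr, rfl⟩
    exact relDistortion_nonneg R
  by_cases hX : Nonempty X
  · by_cases hY : Nonempty Y
    · -- main case
      have hcorr_univ : IsCorrespondence α β (univ : Set (X × Y)) :=
        ⟨fun x => ⟨Classical.arbitrary Y, trivial⟩, fun y => ⟨Classical.arbitrary X, trivial⟩,
          fun ℓ => trivial⟩
      have hCne : C.Nonempty := ⟨relDistortion (univ : Set (X × Y)), univ, hcorr_univ, rfl⟩
      have hAne : A.Nonempty :=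
        ⟨relDistortion (univ : Set (X × Y)) / 2,
          div_nonneg (relDistortion_nonneg _) (by norm_num),
          corrGlueDist univ, corrGlueDist_admissible hcorr_univ⟩
      apply le_antisymm
      · have h2 : ∀ r ∈ C, lghDist α β ≤ r / 2 := by
          rintro r ⟨R, hcorr, rfl⟩
          exact csInf_le hAbdd ⟨div_nonneg (relDistortion_nonneg R) (by norm_num),
            corrGlueDist R, corrGlueDist_admissible hcorr⟩
        have h3 : 2 * lghDist α β ≤ sInf C :=
          le_csInf hCne fun r hr => by linarith [h2 r hr]
        linarith
      · refine le_csInf hAne ?_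
        rintro t ⟨ht0, d, hd0, hdsymm, hdtri, hdX, hdY, hdH1, hdH2, hdL⟩
        suffices h : sInf C ≤ 2 * t by linarith
        refine le_of_forall_pos_le_add fun ε hε => ?_
        have hε4 : (0:ℝ) < ε / 4 := by linarith
        set R := {p : X × Y | d (Sum.inl p.1) (Sum.inr p.2) ≤ t + ε / 4} with hRdef
        have hcorr : IsCorrespondence α β R := by
          refine ⟨?_, ?_, ?_⟩
          · intro x
            obtain ⟨y, hy⟩ := hdH1 x (ε / 4) hε4
            exact ⟨y, hy⟩
          · intro y
            obtain ⟨x, hx⟩ := hdH2 y (ε / 4) hε4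
            exact ⟨x, hx⟩
          · intro ℓ
            have := hdL ℓ
            show d (Sum.inl (α ℓ)) (Sum.inr (β ℓ)) ≤ t + ε / 4
            linarith
        have hRne : R.Nonempty := by
          obtain ⟨y, hy⟩ := hcorr.1 (Classical.arbitrary X); exact ⟨_, hy⟩
        have hdisR : relDistortion R ≤ 2 * (t + ε / 4) := by
          refine csSup_le ?_ ?_
          · obtain ⟨p, hp⟩ := hRne
            exact ⟨_, p, hp, p, hp, rfl⟩
          · rintro s ⟨p, hp, q, hq, rfl⟩
            have hp' : d (Sum.inl p.1) (Sum.inr p.2) ≤ t + ε / 4 := hp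
            have hq' : d (Sum.inl q.1) (Sum.inr q.2) ≤ t + ε / 4 := hq
            have e1 : dist p.1 q.1 ≤ (t + ε / 4) + dist p.2 q.2 + (t + ε / 4) := by
              have t1 : d (Sum.inl p.1) (Sum.inl q.1) ≤
                  d (Sum.inl p.1) (Sum.inr p.2) + d (Sum.inr p.2) (Sum.inl q.1) :=
                hdtri _ _ _
              have t2 : d (Sum.inr p.2) (Sum.inl q.1) ≤
                  d (Sum.inr p.2) (Sum.inr q.2) + d (Sum.inr q.2) (Sum.inl q.1) :=
                hdtri _ _ _
              have s1 : d (Sum.inr q.2) (Sum.inl q.1) = d (Sum.inl q.1) (Sum.inr q.2) :=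
                hdsymm _ _
              rw [hdX] at t1
              rw [hdY] at t2
              linarith
            have e2 : dist p.2 q.2 ≤ (t + ε / 4) + dist p.1 q.1 + (t + ε / 4) := by
              have t1 : d (Sum.inr p.2) (Sum.inr q.2) ≤
                  d (Sum.inr p.2) (Sum.inl p.1) + d (Sum.inl p.1) (Sum.inr q.2) :=
                hdtri _ _ _
              have t2 : d (Sum.inl p.1) (Sum.inr q.2) ≤
                  d (Sum.inl p.1) (Sum.inl q.1) + d (Sum.inl q.1) (Sum.inr q.2) :=
                hdtri _ _ _
              have s1 : d (Sum.inr p.2) (Sum.inl p.1) = d (Sum.inl p.1) (Sum.inr p.2) :=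
                hdsymm _ _
              rw [hdY] at t1
              rw [hdX] at t2
              linarith
            rw [abs_le]
            constructor <;> linarith
        have := csInf_le hCbdd (show relDistortion R ∈ C from ⟨R, hcorr, rfl⟩)
        linarith
    · -- Y empty
      have hAe : A = ∅ := by
        rw [eq_empty_iff_forall_notMem]
        rintro t ⟨ht0, d, hd⟩
        obtain ⟨y, -⟩ := hd.2.2.2.2.2.1 (Classical.arbitrary X) 1 one_pos
        exact hY ⟨y⟩
      have hCe : C = ∅ := by
        rw [eq_empty_iff_forall_notMem]
        rintro r ⟨R, hcorr, rfl⟩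
        obtain ⟨y, -⟩ := hcorr.1 (Classical.arbitrary X)
        exact hY ⟨y⟩
      rw [hlgh, hAe, hCe, Real.sInf_empty, mul_zero]
  · by_cases hY : Nonempty Y
    · -- X empty, Y nonempty
      have hAe : A = ∅ := by
        rw [eq_empty_iff_forall_notMem]
        rintro t ⟨ht0, d, hd⟩
        obtain ⟨x, -⟩ := hd.2.2.2.2.2.2.1 (Classical.arbitrary Y) 1 one_pos
        exact hX ⟨x⟩
      have hCe : C = ∅ := by
        rw [eq_empty_iff_forall_notMem]
        rintro r ⟨R, hcorr, rfl⟩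
        obtain ⟨x, -⟩ := hcorr.2.1 (Classical.arbitrary Y)
        exact hX ⟨x⟩
      rw [hlgh, hAe, hCe, Real.sInf_empty, mul_zero]
    · -- both empty
      have hE : ∀ p : X ⊕ Y, False := by
        rintro (x | y)
        exacts [hX ⟨x⟩, hY ⟨y⟩]
      have hL : ∀ ℓ : L, False := fun ℓ => hX ⟨α ℓ⟩
      have hAeq : A = Ici (0:ℝ) := by
        ext t
        simp only [hA, mem_setOf_eq, mem_Ici]
        constructor
        · exact fun h => h.1
        · intro ht
          refine ⟨ht, fun _ _ => 0, fun p => (hE p).elim, fun p _ => (hE p).elim,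
            fun p _ _ => (hE p).elim, fun x => (hX ⟨x⟩).elim, fun y => (hY ⟨y⟩).elim,
            fun x => (hX ⟨x⟩).elim, fun y => (hY ⟨y⟩).elim, fun ℓ => (hL ℓ).elim⟩
      have hCeq : C = {0} := by
        ext s
        simp only [hC, mem_setOf_eq, mem_singleton_iff]
        constructor
        · rintro ⟨R, hcorr, rfl⟩
          have : {r : ℝ | ∃ p ∈ R, ∃ q ∈ R, r = |dist p.1 q.1 - dist p.2 q.2|} = ∅ := by
            rw [eq_empty_iff_forall_notMem]
            rintro r ⟨p, hp, -⟩
            exact hX ⟨p.1⟩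
          rw [relDistortion, this, Real.sSup_empty]
        · rintro rfl
          refine ⟨∅, ⟨fun x => (hX ⟨x⟩).elim, fun y => (hY ⟨y⟩).elim, fun ℓ => (hL ℓ).elim⟩, ?_⟩
          have : {r : ℝ | ∃ p ∈ (∅ : Set (X × Y)), ∃ q ∈ (∅ : Set (X × Y)),
              r = |dist p.1 q.1 - dist p.2 q.2|} = ∅ := by simp
          rw [relDistortion, this, Real.sSup_empty]
      rw [hlgh, hAeq, hCeq, csInf_Ici, csInf_singleton, mul_zero]
end

section
/- Let L be a set, let (X,α) and (Y,β) be L-labeled metric spaces, and let ε, δ > 0. If (Y,β) is an (ε,δ)-approximation of (X,α), then d^L_GH(X,α;Y,β) < 2ε + δ/2. -/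
open Filter Topology Metric Set

/-- `(S, α₀)` is a labeled `ε`-net in `(X, α)`: `S` is a finite `ε`-net in `X`, the map
`α₀` takes values in `S`, and `sup_{ℓ ∈ L} d_X(α ℓ, α₀ ℓ) < ε`. -/
def IsLabeledNet {L X : Type*} [MetricSpace X]
    (α : L → X) (ε : ℝ) (S : Set X) (α₀ : L → X) : Prop :=
  S.Finite ∧
  (∀ ℓ : L, α₀ ℓ ∈ S) ∧
  (∀ x : X, ∃ s ∈ S, dist x s ≤ ε) ∧
  (⨆ ℓ : L, dist (α ℓ) (α₀ ℓ)) < ε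

/-- `(Y, β)` is an `(ε, δ)`-approximation of `(X, α)`: there are points `x₁, …, x_N ∈ X`
and `y₁, …, y_N ∈ Y`, and labelings `α₀`, `β₀` into them, forming labeled `ε`-nets of
`(X, α)` and `(Y, β)` respectively, such that the correspondence
`{(xᵢ, yᵢ)} ∪ {(α₀ ℓ, β₀ ℓ)}` has distortion less than `δ`. -/
def IsApprox {L X Y : Type*} [MetricSpace X] [MetricSpace Y]
    (α : L → X) (β : L → Y) (ε δ : ℝ) : Prop :=
  ∃ (N : ℕ) (x : Fin N → X) (y : Fin N → Y) (α₀ : L → X) (β₀ : L → Y),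
    IsLabeledNet α ε (Set.range x) α₀ ∧
    IsLabeledNet β ε (Set.range y) β₀ ∧
    relDistortion ((Set.range fun i => (x i, y i)) ∪
      (Set.range fun ℓ => (α₀ ℓ, β₀ ℓ))) < δ

/-- A strong `(ε, δ)`-approximation: additionally `xᵢ = α₀ ℓ` iff `yᵢ = β₀ ℓ` for all
labels `ℓ` and indices `i`. -/
def IsStrongApprox {L X Y : Type*} [MetricSpace X] [MetricSpace Y]
    (α : L → X) (β : L → Y) (ε δ : ℝ) : Prop :=
  ∃ (N : ℕ) (x : Fin N → X) (y : Fin N → Y) (α₀ : L → X) (β₀ : L → Y),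
    IsLabeledNet α ε (Set.range x) α₀ ∧
    IsLabeledNet β ε (Set.range y) β₀ ∧
    relDistortion ((Set.range fun i => (x i, y i)) ∪
      (Set.range fun ℓ => (α₀ ℓ, β₀ ℓ))) < δ ∧
    (∀ (ℓ : L) (i : Fin N), x i = α₀ ℓ ↔ y i = β₀ ℓ)

/-- If `(Y, β)` is an `(ε, δ)`-approximation of `(X, α)`, then
`d^L_GH(X,α;Y,β) < 2ε + δ/2`. -/
theorem stmt8 {L X Y : Type*} [MetricSpace X] [CompactSpace X]
    [MetricSpace Y] [CompactSpace Y]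
    (α : L → X) (β : L → Y) (ε δ : ℝ) (hε : 0 < ε) (hδ : 0 < δ)
    (h : IsApprox α β ε δ) :
    lghDist α β < 2 * ε + δ / 2 := by
  obtain ⟨N, x, y, α₀, β₀, ⟨hXfin, hα₀, hXnet, hsα⟩, ⟨hYfin, hβ₀, hYnet, hsβ⟩, hdis⟩ := h
  set R : Set (X × Y) := (Set.range fun i => (x i, y i)) ∪
      (Set.range fun ℓ => (α₀ ℓ, β₀ ℓ)) with hR
  rcases Nat.eq_zero_or_pos N with hN | hN
  · -- degenerate case: everything is empty
    subst hN
    have hXe : IsEmpty X := ⟨fun x' => by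
      obtain ⟨s, hs, -⟩ := hXnet x'; obtain ⟨i, -⟩ := hs; exact i.elim0⟩
    have hYe : IsEmpty Y := ⟨fun y' => by
      obtain ⟨s, hs, -⟩ := hYnet y'; obtain ⟨i, -⟩ := hs; exact i.elim0⟩
    have hLe : IsEmpty L := ⟨fun ℓ => by
      obtain ⟨i, -⟩ := hα₀ ℓ; exact i.elim0⟩
    have hle : lghDist α β ≤ ε := by
      apply csInf_le ⟨0, fun s hs => hs.1⟩
      refine ⟨hε.le, fun _ _ => 0, fun _ => rfl, fun _ _ => rfl,
        fun _ _ _ => by norm_num, fun x' => hXe.elim x', fun y' => hYe.elim y',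
        fun x' => hXe.elim x', fun y' => hYe.elim y', fun ℓ => hLe.elim ℓ⟩
    linarith
  · have i0 : Fin N := ⟨0, hN⟩
    have hp0 : (x i0, y i0) ∈ R := Or.inl ⟨i0, rfl⟩
    have hRne : R.Nonempty := ⟨_, hp0⟩
    set δ' := relDistortion R with hδ'def
    have hbdd : BddAbove {r : ℝ | ∃ p ∈ R, ∃ q ∈ R, r = |dist p.1 q.1 - dist p.2 q.2|} := by
      refine ⟨Metric.diam (Set.univ : Set X) + Metric.diam (Set.univ : Set Y), ?_⟩
      rintro r ⟨p, hp, q, hq, rfl⟩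
      have h1 : dist p.1 q.1 ≤ Metric.diam (Set.univ : Set X) :=
        Metric.dist_le_diam_of_mem isCompact_univ.isBounded (mem_univ _) (mem_univ _)
      have h2 : dist p.2 q.2 ≤ Metric.diam (Set.univ : Set Y) :=
        Metric.dist_le_diam_of_mem isCompact_univ.isBounded (mem_univ _) (mem_univ _)
      rcases abs_cases (dist p.1 q.1 - dist p.2 q.2) with ⟨he, -⟩ | ⟨he, -⟩ <;>
        · rw [he]
          have := dist_nonneg (x := p.1) (y := q.1)
          have := dist_nonneg (x := p.2) (y := q.2)
          linarith
    have habs : ∀ p ∈ R, ∀ q ∈ R, |dist p.1 q.1 - dist p.2 q.2| ≤ δ' :=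
      fun p hp q hq => le_csSup hbdd ⟨p, hp, q, hq, rfl⟩
    have hδ'0 : 0 ≤ δ' := by
      have := habs _ hp0 _ hp0; simpa using this
    have hδ'δ : δ' < δ := hdis
    set ρ := δ' / 2 with hρdef
    have hρ0 : 0 ≤ ρ := by positivity
    set D : X → Y → ℝ :=
      fun a b => sInf ((fun p : X × Y => dist a p.1 + ρ + dist p.2 b) '' R) with hDdef
    have hSne : ∀ (a : X) (b : Y),
        ((fun p : X × Y => dist a p.1 + ρ + dist p.2 b) '' R).Nonempty :=
      fun a b => hRne.image _
    have hSbb : ∀ (a : X) (b : Y),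
        BddBelow ((fun p : X × Y => dist a p.1 + ρ + dist p.2 b) '' R) := by
      intro a b
      refine ⟨0, ?_⟩
      rintro r ⟨p, hp, rfl⟩
      dsimp only
      have := dist_nonneg (x := a) (y := p.1)
      have := dist_nonneg (x := p.2) (y := b)
      linarith
    have hDle : ∀ (a : X) (b : Y), ∀ p ∈ R, D a b ≤ dist a p.1 + ρ + dist p.2 b :=
      fun a b p hp => csInf_le (hSbb a b) ⟨p, hp, rfl⟩
    have hDge : ∀ (a : X) (b : Y) (c : ℝ),
        (∀ p ∈ R, c ≤ dist a p.1 + ρ + dist p.2 b) → c ≤ D a b :=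
      fun a b c hc => le_csInf (hSne a b) (by rintro r ⟨p, hp, rfl⟩; exact hc p hp)
    -- triangle lemmas
    have T1 : ∀ (a a' : X) (b : Y), D a b ≤ dist a a' + D a' b := by
      intro a a' b
      have : D a b - dist a a' ≤ D a' b := by
        apply hDge
        intro p hp
        have h1 := hDle a b p hp
        have h2 := dist_triangle a a' p.1
        linarith
      linarith
    have T2 : ∀ (a : X) (b b' : Y), D a b' ≤ D a b + dist b b' := by
      intro a b b'
      have : D a b' - dist b b' ≤ D a b := by
        apply hDge
        intro p hp
        have h1 := hDle a b' p hp
        have h2 := dist_triangle p.2 b b'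
        linarith
      linarith
    have T3 : ∀ (a a' : X) (b : Y), dist a a' ≤ D a b + D a' b := by
      intro a a' b
      have key : ∀ q ∈ R, dist a a' - D a b ≤ dist a' q.1 + ρ + dist q.2 b := by
        intro q hq
        have h1 : dist a a' - (dist a' q.1 + ρ + dist q.2 b) ≤ D a b := by
          apply hDge
          intro p hp
          have hk := (abs_le.mp (habs p hp q hq)).2
          have t1 := dist_triangle4 a p.1 q.1 a'
          have t2 := dist_triangle p.2 b q.2
          have e1 : dist q.1 a' = dist a' q.1 := dist_comm _ _
          have e2 : dist b q.2 = dist q.2 b := dist_comm _ _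
          have e3 : δ' = 2 * ρ := by rw [hρdef]; ring
          linarith
        linarith
      have := hDge a' b (dist a a' - D a b) key
      linarith
    have T4 : ∀ (a : X) (b b' : Y), dist b b' ≤ D a b + D a b' := by
      intro a b b'
      have key : ∀ q ∈ R, dist b b' - D a b ≤ dist a q.1 + ρ + dist q.2 b' := by
        intro q hq
        have h1 : dist b b' - (dist a q.1 + ρ + dist q.2 b') ≤ D a b := by
          apply hDge
          intro p hp
          have hk := (abs_le.mp (habs p hp q hq)).1
          have t1 := dist_triangle4 b p.2 q.2 b'
          have t2 := dist_triangle p.1 a q.1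
          have e1 : dist b p.2 = dist p.2 b := dist_comm _ _
          have e2 : dist p.1 a = dist a p.1 := dist_comm _ _
          have e3 : δ' = 2 * ρ := by rw [hρdef]; ring
          linarith
        linarith
      have := hDge a b' (dist b b' - D a b) key
      linarith
    -- bounds on labels
    have hαbdd : BddAbove (Set.range fun ℓ => dist (α ℓ) (α₀ ℓ)) := by
      refine ⟨Metric.diam (Set.univ : Set X), ?_⟩
      rintro r ⟨ℓ, rfl⟩
      exact Metric.dist_le_diam_of_mem isCompact_univ.isBounded (mem_univ _) (mem_univ _)
    have hβbdd : BddAbove (Set.range fun ℓ => dist (β ℓ) (β₀ ℓ)) := by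
      refine ⟨Metric.diam (Set.univ : Set Y), ?_⟩
      rintro r ⟨ℓ, rfl⟩
      exact Metric.dist_le_diam_of_mem isCompact_univ.isBounded (mem_univ _) (mem_univ _)
    set sα := ⨆ ℓ : L, dist (α ℓ) (α₀ ℓ) with hsαdef
    set sβ := ⨆ ℓ : L, dist (β ℓ) (β₀ ℓ) with hsβdef
    have hαle : ∀ ℓ : L, dist (α ℓ) (α₀ ℓ) ≤ sα := fun ℓ => le_ciSup hαbdd ℓ
    have hβle : ∀ ℓ : L, dist (β ℓ) (β₀ ℓ) ≤ sβ := fun ℓ => le_ciSup hβbdd ℓ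
    set t := max ε (sα + sβ) + ρ with htdef
    have ht0 : 0 ≤ t := by
      have := le_max_left ε (sα + sβ)
      linarith
    -- the pseudometric
    let d : X ⊕ Y → X ⊕ Y → ℝ := fun p q =>
      match p, q with
      | Sum.inl a, Sum.inl a' => dist a a'
      | Sum.inl a, Sum.inr b => D a b
      | Sum.inr b, Sum.inl a => D a b
      | Sum.inr b, Sum.inr b' => dist b b'
    have hεt : ε + ρ ≤ t := by
      have := le_max_left ε (sα + sβ); linarith
    have hadm : IsAdmissible α β t d := by
      refine ⟨?_, ?_, ?_, fun _ _ => rfl, fun _ _ => rfl, ?_, ?_, ?_⟩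
      · rintro (a | b) <;> simp [d]
      · rintro (a | b) (a' | b') <;> simp [d, dist_comm]
      · rintro (a | b) (a' | b') (a'' | b'')
        · exact dist_triangle a a' a''
        · exact T1 a a' b''
        · exact T3 a a'' b'
        · exact T2 a b' b''
        · show D a'' b ≤ D a' b + dist a' a''
          have h1 := T1 a'' a' b
          have h2 : dist a'' a' = dist a' a'' := dist_comm _ _
          linarith
        · exact T4 a' b b''
        · show D a'' b ≤ dist b b' + D a'' b'
          have h1 := T2 a'' b' b
          have h2 : dist b' b = dist b b' := dist_comm _ _
          linarith
        · exact dist_triangle b b' b''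
      · intro a ε' hε'
        obtain ⟨s, hs, hds⟩ := hXnet a
        obtain ⟨i, rfl⟩ := hs
        refine ⟨y i, ?_⟩
        have h1 : D a (y i) ≤ dist a (x i) + ρ + dist (y i) (y i) :=
          hDle a (y i) _ (Or.inl ⟨i, rfl⟩)
        simp only [dist_self] at h1
        show D a (y i) ≤ t + ε'
        linarith
      · intro b ε' hε'
        obtain ⟨s, hs, hds⟩ := hYnet b
        obtain ⟨i, rfl⟩ := hs
        refine ⟨x i, ?_⟩
        have h1 : D (x i) b ≤ dist (x i) (x i) + ρ + dist (y i) b :=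
          hDle (x i) b _ (Or.inl ⟨i, rfl⟩)
        simp only [dist_self] at h1
        have h2 : dist (y i) b = dist b (y i) := dist_comm _ _
        show D (x i) b ≤ t + ε'
        linarith
      · intro ℓ
        have h1 : D (α ℓ) (β ℓ) ≤ dist (α ℓ) (α₀ ℓ) + ρ + dist (β₀ ℓ) (β ℓ) :=
          hDle (α ℓ) (β ℓ) (α₀ ℓ, β₀ ℓ) (Or.inr ⟨ℓ, rfl⟩)
        have h2 : dist (β₀ ℓ) (β ℓ) = dist (β ℓ) (β₀ ℓ) := dist_comm _ _
        have h3 := hαle ℓ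
        have h4 := hβle ℓ
        have h5 := le_max_right ε (sα + sβ)
        show D (α ℓ) (β ℓ) ≤ t
        linarith
    have hle : lghDist α β ≤ t := csInf_le ⟨0, fun s hs => hs.1⟩ ⟨ht0, d, hadm⟩
    have hlt : t < 2 * ε + δ / 2 := by
      have hm : max ε (sα + sβ) < 2 * ε := max_lt (by linarith) (by linarith)
      have : ρ < δ / 2 := by rw [hρdef]; linarith
      linarith
    linarith
end

section
/- Let L be a set and let (X,α) and (Y,β) be L-labeled metric spaces. Define d_L(X,α;Y,β) := inf over all compact metric spaces Z and all isometric embeddings f : X → Z and g : Y → Z of the quantity d^Z_H(f(X), g(Y)) + sup_{ℓ∈L} d_Z(f(α(ℓ)), g(β(ℓ))), where d^Z_H is the Hausdorff distance in Z. Then d^L_GH(X,α;Y,β) ≤ d_L(X,α;Y,β) ≤ 2 · d^L_GH(X,α;Y,β). -/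
open Filter Topology Metric Set

universe u v

/-- A bundled compact metric space. -/
structure CompactMetric : Type (v + 1) where
  carrier : Type v
  [ms : MetricSpace carrier]
  [cs : CompactSpace carrier]

attribute [instance] CompactMetric.ms CompactMetric.cs

/-- The labeled Gromov–Hausdorff distance of Noakes–Lassas type: the infimum over all
compact metric spaces `Z` and isometric embeddings `f : X → Z`, `g : Y → Z` of
`d^Z_H(f(X), g(Y)) + sup_{ℓ ∈ L} d_Z(f (α ℓ), g (β ℓ))`. -/
noncomputable def dLEmb {L : Type*} {X : Type u} {Y : Type v}
    [MetricSpace X] [MetricSpace Y] (α : L → X) (β : L → Y) : ℝ :=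
  sInf {r : ℝ | ∃ (Z : CompactMetric.{max u v}) (f : X → Z.carrier) (g : Y → Z.carrier),
    Isometry f ∧ Isometry g ∧
    r = hausdorffDist (Set.range f) (Set.range g) +
      ⨆ ℓ : L, dist (f (α ℓ)) (g (β ℓ))}

/- ### Auxiliary material -/

private lemma le_of_forall_pos_le_add'' {a b : ℝ} (h : ∀ ε > (0 : ℝ), a ≤ b + ε) : a ≤ b := by
  by_contra hc
  push_neg at hc
  linarith [h ((a - b) / 2) (by linarith)]

/-- A type synonym for `X ⊕ Y`, to carry the pseudometric `d`. -/
def AuxZ {X : Type u} {Y : Type v} (_d : X ⊕ Y → X ⊕ Y → ℝ) : Type (max u v) := X ⊕ Y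

/-- The canonical identification of `X ⊕ Y` with `AuxZ d`. -/
def toAuxZ {X : Type u} {Y : Type v} (d : X ⊕ Y → X ⊕ Y → ℝ) : X ⊕ Y → AuxZ d := fun p => p

section Aux

variable {L : Type*} {X : Type u} {Y : Type v}
  [MetricSpace X] [CompactSpace X] [MetricSpace Y] [CompactSpace Y]

/-- Any element of the defining set of `dLEmb` is at least `0`. -/
private lemma dLEmb_set_nonneg (α : L → X) (β : L → Y) :
    ∀ r ∈ {r : ℝ | ∃ (Z : CompactMetric.{max u v}) (f : X → Z.carrier) (g : Y → Z.carrier),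
      Isometry f ∧ Isometry g ∧
      r = hausdorffDist (Set.range f) (Set.range g) +
        ⨆ ℓ : L, dist (f (α ℓ)) (g (β ℓ))}, 0 ≤ r := by
  rintro r ⟨Z, f, g, hf, hg, rfl⟩
  exact add_nonneg hausdorffDist_nonneg (Real.iSup_nonneg fun ℓ => dist_nonneg)

/-- Lemma B: an admissible pseudometric yields an embedding bound. -/
private lemma dLEmb_le_two_mul (α : L → X) (β : L → Y) {t : ℝ} (ht : 0 ≤ t)
    {d : X ⊕ Y → X ⊕ Y → ℝ} (hd : IsAdmissible α β t d) :
    dLEmb α β ≤ 2 * t := by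
  obtain ⟨h1, h2, h3, h4, h5, h6, h7, h8⟩ := hd
  letI : PseudoMetricSpace (AuxZ d) :=
    { dist := d
      dist_self := h1
      dist_comm := h2
      dist_triangle := h3 }
  have hinl : Isometry (fun x : X => toAuxZ d (Sum.inl x)) :=
    Isometry.of_dist_eq fun x x' => h4 x x'
  have hinr : Isometry (fun y : Y => toAuxZ d (Sum.inr y)) :=
    Isometry.of_dist_eq fun y y' => h5 y y'
  have hcont : Continuous (toAuxZ d) := by
    rw [continuous_sum_dom]
    exact ⟨hinl.continuous, hinr.continuous⟩
  haveI : CompactSpace (AuxZ d) := by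
    refine ⟨?_⟩
    have himg : toAuxZ d '' univ = univ :=
      Set.image_univ_of_surjective fun p => ⟨p, rfl⟩
    rw [← himg]
    exact isCompact_univ.image hcont
  haveI : CompactSpace (SeparationQuotient (AuxZ d)) := by
    refine ⟨?_⟩
    have himg : (SeparationQuotient.mk : AuxZ d → _) '' univ = univ := by
      apply Set.image_univ_of_surjective
      exact SeparationQuotient.surjective_mk
    rw [← himg]
    exact isCompact_univ.image SeparationQuotient.continuous_mk
  set Z : CompactMetric.{max u v} := CompactMetric.mk (SeparationQuotient (AuxZ d))
  set f : X → Z.carrier := fun x => SeparationQuotient.mk (toAuxZ d (Sum.inl x)) with hfdef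
  set g : Y → Z.carrier := fun y => SeparationQuotient.mk (toAuxZ d (Sum.inr y)) with hgdef
  have hdistfg : ∀ (x : X) (y : Y), dist (f x) (g y) = d (Sum.inl x) (Sum.inr y) := fun x y => rfl
  have hf : Isometry f := Isometry.of_dist_eq fun x x' => h4 x x'
  have hg : Isometry g := Isometry.of_dist_eq fun y y' => h5 y y'
  have hH : hausdorffDist (Set.range f) (Set.range g) ≤ t := by
    apply hausdorffDist_le_of_infDist ht
    · rintro z ⟨x, rfl⟩
      apply le_of_forall_pos_le_add''
      intro ε hε
      obtain ⟨y, hy⟩ := h6 x ε hε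
      calc infDist (f x) (Set.range g) ≤ dist (f x) (g y) :=
            infDist_le_dist_of_mem (mem_range_self y)
        _ ≤ t + ε := by rw [hdistfg]; exact hy
    · rintro z ⟨y, rfl⟩
      apply le_of_forall_pos_le_add''
      intro ε hε
      obtain ⟨x, hx⟩ := h7 y ε hε
      calc infDist (g y) (Set.range f) ≤ dist (g y) (f x) :=
            infDist_le_dist_of_mem (mem_range_self x)
        _ = dist (f x) (g y) := dist_comm _ _
        _ ≤ t + ε := by rw [hdistfg]; exact hx
  have hS : (⨆ ℓ : L, dist (f (α ℓ)) (g (β ℓ))) ≤ t := by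
    apply Real.iSup_le _ ht
    intro ℓ
    rw [hdistfg]
    exact h8 ℓ
  have hmem : hausdorffDist (Set.range f) (Set.range g) +
      (⨆ ℓ : L, dist (f (α ℓ)) (g (β ℓ))) ∈
      {r : ℝ | ∃ (Z : CompactMetric.{max u v}) (f : X → Z.carrier) (g : Y → Z.carrier),
        Isometry f ∧ Isometry g ∧
        r = hausdorffDist (Set.range f) (Set.range g) +
          ⨆ ℓ : L, dist (f (α ℓ)) (g (β ℓ))} :=
    ⟨Z, f, g, hf, hg, rfl⟩
  calc dLEmb α β ≤ hausdorffDist (Set.range f) (Set.range g) +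
        (⨆ ℓ : L, dist (f (α ℓ)) (g (β ℓ))) :=
        csInf_le ⟨0, dLEmb_set_nonneg α β⟩ hmem
    _ ≤ t + t := add_le_add hH hS
    _ = 2 * t := by ring

/-- Lemma A: an embedding yields an admissible pseudometric. -/
private lemma embedding_mem_lgh_set (α : L → X) (β : L → Y) [Nonempty X] [Nonempty Y]
    (Z : CompactMetric.{max u v}) (f : X → Z.carrier) (g : Y → Z.carrier)
    (hf : Isometry f) (hg : Isometry g) :
    0 ≤ hausdorffDist (Set.range f) (Set.range g) +
        (⨆ ℓ : L, dist (f (α ℓ)) (g (β ℓ))) ∧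
    ∃ d : X ⊕ Y → X ⊕ Y → ℝ, IsAdmissible α β
      (hausdorffDist (Set.range f) (Set.range g) +
        ⨆ ℓ : L, dist (f (α ℓ)) (g (β ℓ))) d := by
  set H := hausdorffDist (Set.range f) (Set.range g) with hHdef
  set S := ⨆ ℓ : L, dist (f (α ℓ)) (g (β ℓ)) with hSdef
  have hH0 : 0 ≤ H := hausdorffDist_nonneg
  have hS0 : 0 ≤ S := Real.iSup_nonneg fun ℓ => dist_nonneg
  have fin : EMetric.hausdorffEdist (Set.range f) (Set.range g) ≠ ⊤ :=
    hausdorffEdist_ne_top_of_nonempty_of_bounded (range_nonempty f) (range_nonempty g)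
      (isCompact_range hf.continuous).isBounded (isCompact_range hg.continuous).isBounded
  refine ⟨add_nonneg hH0 hS0, fun p q => dist (Sum.elim f g p) (Sum.elim f g q), ?_⟩
  unfold IsAdmissible
  refine ⟨fun p => dist_self _, fun p q => dist_comm _ _, fun p q r => dist_triangle _ _ _,
    fun x x' => hf.dist_eq x x', fun y y' => hg.dist_eq y y', ?_, ?_, ?_⟩
  · intro x ε hε
    obtain ⟨z, ⟨y, rfl⟩, hz⟩ := exists_dist_lt_of_hausdorffDist_lt (mem_range_self x)
      (lt_add_of_pos_right H hε) fin
    exact ⟨y, by simpa using le_trans hz.le (by linarith)⟩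
  · intro y ε hε
    obtain ⟨z, ⟨x, rfl⟩, hz⟩ := exists_dist_lt_of_hausdorffDist_lt' (mem_range_self y)
      (lt_add_of_pos_right H hε) fin
    exact ⟨x, by simpa using le_trans hz.le (by linarith)⟩
  · intro ℓ
    have hbdd : BddAbove (Set.range fun ℓ : L => dist (f (α ℓ)) (g (β ℓ))) := by
      refine ⟨diam (univ : Set Z.carrier), ?_⟩
      rintro _ ⟨ℓ, rfl⟩
      exact dist_le_diam_of_mem isCompact_univ.isBounded (mem_univ _) (mem_univ _)
    have : dist (f (α ℓ)) (g (β ℓ)) ≤ S := le_ciSup hbdd ℓ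
    simpa using le_trans this (by linarith)

end Aux

/-- The two definitions of the labeled Gromov–Hausdorff distance are bi-Lipschitz
equivalent: `d^L_GH ≤ d_L ≤ 2 d^L_GH`. -/
theorem stmt17 {L : Type*} {X : Type u} {Y : Type v}
    [MetricSpace X] [CompactSpace X] [MetricSpace Y] [CompactSpace Y]
    (α : L → X) (β : L → Y) :
    lghDist α β ≤ dLEmb α β ∧ dLEmb α β ≤ 2 * lghDist α β := by
  rcases isEmpty_or_nonempty X with hX | hX
  · -- `X` empty: both distances are `0`.
    haveI : IsEmpty L := ⟨fun ℓ => isEmptyElim (α ℓ)⟩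
    have hd : dLEmb α β = 0 := by
      have h0 : (0 : ℝ) ∈ {r : ℝ | ∃ (Z : CompactMetric.{max u v}) (f : X → Z.carrier)
          (g : Y → Z.carrier), Isometry f ∧ Isometry g ∧
          r = hausdorffDist (Set.range f) (Set.range g) +
            ⨆ ℓ : L, dist (f (α ℓ)) (g (β ℓ))} := by
        haveI : CompactSpace (ULift.{u} Y) := by
          refine ⟨?_⟩
          have : (ULift.up : Y → ULift.{u} Y) '' univ = univ :=
            Set.image_univ_of_surjective ULift.up_surjective
          rw [← this]
          exact isCompact_univ.image (Isometry.of_dist_eq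
            (fun _ _ => rfl : ∀ a b : Y, dist (ULift.up a) (ULift.up b) = dist a b)).continuous
        refine ⟨CompactMetric.mk (ULift.{u} Y), fun x => isEmptyElim x, ULift.up,
          fun x => isEmptyElim x, Isometry.of_dist_eq fun _ _ => rfl, ?_⟩
        simp [Set.range_eq_empty, hausdorffDist_empty', Real.iSup_of_isEmpty]
      exact le_antisymm (csInf_le ⟨0, dLEmb_set_nonneg α β⟩ h0)
        (Real.sInf_nonneg (dLEmb_set_nonneg α β))
    have hl : lghDist α β = 0 := by
      rcases isEmpty_or_nonempty Y with hY | hY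
      · have hset : {t : ℝ | 0 ≤ t ∧ ∃ d : X ⊕ Y → X ⊕ Y → ℝ, IsAdmissible α β t d} =
            Set.Ici 0 := by
          ext t
          simp only [mem_setOf_eq, mem_Ici]
          constructor
          · exact fun h => h.1
          · intro ht
            refine ⟨ht, fun _ _ => 0, ?_⟩
            unfold IsAdmissible
            exact ⟨fun p => rfl, fun p q => rfl,
              fun p q r => by norm_num, fun x => isEmptyElim x, fun y => isEmptyElim y,
              fun x => isEmptyElim x, fun y => isEmptyElim y, fun ℓ => isEmptyElim ℓ⟩
        rw [lghDist, hset, csInf_Ici]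
      · have hset : {t : ℝ | 0 ≤ t ∧ ∃ d : X ⊕ Y → X ⊕ Y → ℝ, IsAdmissible α β t d} =
            (∅ : Set ℝ) := by
          rw [Set.eq_empty_iff_forall_notMem]
          rintro t ⟨ht, d, hd⟩
          obtain ⟨x, -⟩ := hd.2.2.2.2.2.2.1 hY.some 1 one_pos
          exact isEmptyElim x
        rw [lghDist, hset, Real.sInf_empty]
    rw [hd, hl]
    norm_num
  rcases isEmpty_or_nonempty Y with hY | hY
  · -- `Y` empty: both distances are `0`.
    haveI : IsEmpty L := ⟨fun ℓ => isEmptyElim (β ℓ)⟩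
    have hd : dLEmb α β = 0 := by
      have h0 : (0 : ℝ) ∈ {r : ℝ | ∃ (Z : CompactMetric.{max u v}) (f : X → Z.carrier)
          (g : Y → Z.carrier), Isometry f ∧ Isometry g ∧
          r = hausdorffDist (Set.range f) (Set.range g) +
            ⨆ ℓ : L, dist (f (α ℓ)) (g (β ℓ))} := by
        haveI : CompactSpace (ULift.{v} X) := by
          refine ⟨?_⟩
          have : (ULift.up : X → ULift.{v} X) '' univ = univ :=
            Set.image_univ_of_surjective ULift.up_surjective
          rw [← this]
          exact isCompact_univ.image (Isometry.of_dist_eq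
            (fun _ _ => rfl : ∀ a b : X, dist (ULift.up a) (ULift.up b) = dist a b)).continuous
        refine ⟨CompactMetric.mk (ULift.{v} X), ULift.up, fun y => isEmptyElim y,
          Isometry.of_dist_eq fun _ _ => rfl, fun y => isEmptyElim y, ?_⟩
        simp [Set.range_eq_empty, hausdorffDist_empty, Real.iSup_of_isEmpty]
      exact le_antisymm (csInf_le ⟨0, dLEmb_set_nonneg α β⟩ h0)
        (Real.sInf_nonneg (dLEmb_set_nonneg α β))
    have hl : lghDist α β = 0 := by
      have hset : {t : ℝ | 0 ≤ t ∧ ∃ d : X ⊕ Y → X ⊕ Y → ℝ, IsAdmissible α β t d} =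
          (∅ : Set ℝ) := by
        rw [Set.eq_empty_iff_forall_notMem]
        rintro t ⟨ht, d, hd⟩
        obtain ⟨y, -⟩ := hd.2.2.2.2.2.1 hX.some 1 one_pos
        exact isEmptyElim y
      rw [lghDist, hset, Real.sInf_empty]
    rw [hd, hl]
    norm_num
  -- Main case: both `X` and `Y` nonempty.
  -- First, the defining set of `dLEmb` is nonempty, using the sum metric space.
  letI : MetricSpace (X ⊕ Y) := Metric.metricSpaceSum
  haveI : CompactSpace (X ⊕ Y) := by
    refine ⟨?_⟩
    have huniv : (univ : Set (X ⊕ Y)) = Set.range Sum.inl ∪ Set.range Sum.inr := by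
      ext p
      cases p <;> simp
    rw [huniv]
    exact (isCompact_range Metric.isometry_inl.continuous).union
      (isCompact_range Metric.isometry_inr.continuous)
  have hZ0 : ∃ r : ℝ, r ∈ {r : ℝ | ∃ (Z : CompactMetric.{max u v}) (f : X → Z.carrier)
      (g : Y → Z.carrier), Isometry f ∧ Isometry g ∧
      r = hausdorffDist (Set.range f) (Set.range g) +
        ⨆ ℓ : L, dist (f (α ℓ)) (g (β ℓ))} :=
    ⟨_, ⟨CompactMetric.mk (X ⊕ Y), Sum.inl, Sum.inr,
      Metric.isometry_inl, Metric.isometry_inr, rfl⟩⟩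
  constructor
  · -- `lghDist ≤ dLEmb`
    refine le_csInf hZ0 ?_
    rintro r ⟨Z, f, g, hf, hg, rfl⟩
    obtain ⟨hr0, d, hd⟩ := embedding_mem_lgh_set α β Z f g hf hg
    exact csInf_le ⟨0, fun t ht => ht.1⟩ ⟨hr0, d, hd⟩
  · -- `dLEmb ≤ 2 * lghDist`
    have hlne : ∃ t : ℝ, t ∈ {t : ℝ | 0 ≤ t ∧ ∃ d : X ⊕ Y → X ⊕ Y → ℝ,
        IsAdmissible α β t d} := by
      obtain ⟨r, Z, f, g, hf, hg, rfl⟩ := hZ0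
      obtain ⟨hr0, d, hd⟩ := embedding_mem_lgh_set α β Z f g hf hg
      exact ⟨_, hr0, d, hd⟩
    have hkey : ∀ t ∈ {t : ℝ | 0 ≤ t ∧ ∃ d : X ⊕ Y → X ⊕ Y → ℝ, IsAdmissible α β t d},
        dLEmb α β ≤ 2 * t := by
      rintro t ⟨ht, d, hd⟩
      exact dLEmb_le_two_mul α β ht hd
    have hhalf : dLEmb α β / 2 ≤ lghDist α β := by
      refine le_csInf hlne ?_
      intro t ht
      linarith [hkey t ht]
    linarith
end

section
/- Let L be a set and let (X,α) and (Y,β) be L-labeled metric spaces. Suppose that for every finite subset L' ⊆ L one has d^{L'}_GH(X, α|_{L'}; Y, β|_{L'}) = 0, and suppose that α(L) is a closed subset of X. Then d^L_GH(X,α;Y,β) = 0. -/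
open Filter Topology Metric Set

section Aux

variable {L X Y : Type*} [MetricSpace X] [CompactSpace X] [MetricSpace Y] [CompactSpace Y]

/-- The trivial cross-pseudometric with constant cross distance `C`. -/
def crossD (C : ℝ) : X ⊕ Y → X ⊕ Y → ℝ
  | Sum.inl x, Sum.inl x' => dist x x'
  | Sum.inr y, Sum.inr y' => dist y y'
  | _, _ => C

lemma exists_trivial_admissible [Nonempty X] [Nonempty Y] (α : L → X) (β : L → Y) :
    ∃ t : ℝ, 0 ≤ t ∧ ∃ d, IsAdmissible α β t d := by
  set C : ℝ := diam (univ : Set X) + diam (univ : Set Y) with hC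
  have hC0 : 0 ≤ C := add_nonneg diam_nonneg diam_nonneg
  have hdX : ∀ x x' : X, dist x x' ≤ C := fun x x' =>
    le_trans (dist_le_diam_of_mem isCompact_univ.isBounded (mem_univ _) (mem_univ _))
      (le_add_of_nonneg_right diam_nonneg)
  have hdY : ∀ y y' : Y, dist y y' ≤ C := fun y y' =>
    le_trans (dist_le_diam_of_mem isCompact_univ.isBounded (mem_univ _) (mem_univ _))
      (le_add_of_nonneg_left diam_nonneg)
  refine ⟨C, hC0, crossD C, ?_, ?_, ?_, ?_, ?_, ?_, ?_, ?_⟩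
  · rintro (x | y) <;> simp [crossD]
  · rintro (x | y) (x' | y') <;> simp [crossD, dist_comm]
  · rintro (x | y) (x' | y') (x'' | y'') <;> simp only [crossD]
    · exact dist_triangle _ _ _
    · exact le_add_of_nonneg_left dist_nonneg
    · exact (hdX _ _).trans (le_add_of_nonneg_left hC0)
    · exact le_add_of_nonneg_right dist_nonneg
    · exact le_add_of_nonneg_right dist_nonneg
    · exact (hdY _ _).trans (le_add_of_nonneg_left hC0)
    · exact le_add_of_nonneg_left dist_nonneg
    · exact dist_triangle _ _ _
  · intro x x'; rfl
  · intro y y'; rfl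
  · intro x ε hε
    exact ⟨Classical.arbitrary Y, by simp only [crossD]; linarith⟩
  · intro y ε hε
    exact ⟨Classical.arbitrary X, by simp only [crossD]; linarith⟩
  · intro ℓ; simp only [crossD]; exact le_refl C

lemma exists_small_admissible [Nonempty X] [Nonempty Y] (α : L → X) (β : L → Y)
    (h0 : lghDist α β = 0) {ε : ℝ} (hε : 0 < ε) :
    ∃ t : ℝ, 0 ≤ t ∧ t < ε ∧ ∃ d, IsAdmissible α β t d := by
  have hne : {t : ℝ | 0 ≤ t ∧ ∃ d : X ⊕ Y → X ⊕ Y → ℝ, IsAdmissible α β t d}.Nonempty := by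
    obtain ⟨t, ht, d, hd⟩ := exists_trivial_admissible α β
    exact ⟨t, ht, d, hd⟩
  have hlt : sInf {t : ℝ | 0 ≤ t ∧ ∃ d : X ⊕ Y → X ⊕ Y → ℝ, IsAdmissible α β t d} < ε := by
    rw [show sInf {t : ℝ | 0 ≤ t ∧ ∃ d : X ⊕ Y → X ⊕ Y → ℝ, IsAdmissible α β t d} = 0 from h0]
    exact hε
  obtain ⟨t, ⟨ht0, d, hd⟩, htε⟩ := exists_lt_of_csInf_lt hne hlt
  exact ⟨t, ht0, htε, d, hd⟩

lemma dist_beta_le [Nonempty X] [Nonempty Y] (α : L → X) (β : L → Y)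
    (h : ∀ L' : Finset L,
      lghDist (fun i : L' => α i.1) (fun i : L' => β i.1) = 0)
    (ℓ ℓ' : L) : dist (β ℓ) (β ℓ') ≤ dist (α ℓ) (α ℓ') := by
  classical
  refine le_of_forall_pos_le_add fun ε hε => ?_
  set L' : Finset L := {ℓ, ℓ'} with hL'
  obtain ⟨t, ht0, htε, d, hd1, hd2, hd3, hd4, hd5, hd6, hd7, hd8⟩ :=
    exists_small_admissible (fun i : L' => α i.1) (fun i : L' => β i.1) (h L') (half_pos hε)
  have hi : ℓ ∈ L' := by simp [hL']
  have hj : ℓ' ∈ L' := by simp [hL']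
  have h8i := hd8 ⟨ℓ, hi⟩
  have h8j := hd8 ⟨ℓ', hj⟩
  simp only at h8i h8j
  have key : d (Sum.inr (β ℓ)) (Sum.inr (β ℓ')) ≤ dist (α ℓ) (α ℓ') + 2 * t := by
    have t1 := hd3 (Sum.inr (β ℓ)) (Sum.inl (α ℓ)) (Sum.inr (β ℓ'))
    have t2 := hd3 (Sum.inl (α ℓ)) (Sum.inl (α ℓ')) (Sum.inr (β ℓ'))
    have e1 : d (Sum.inr (β ℓ)) (Sum.inl (α ℓ)) = d (Sum.inl (α ℓ)) (Sum.inr (β ℓ)) := hd2 _ _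
    have e2 := hd4 (α ℓ) (α ℓ')
    linarith
  have e3 := hd5 (β ℓ) (β ℓ')
  linarith

end Aux

/-- If for every finite subset `L' ⊆ L` the labeled Gromov–Hausdorff distance of
`(X, α|_{L'})` and `(Y, β|_{L'})` is zero, and `α(L)` is closed in `X`, then
`d^L_GH(X, α; Y, β) = 0`. -/
theorem stmt19 {L X Y : Type*} [MetricSpace X] [CompactSpace X]
    [MetricSpace Y] [CompactSpace Y]
    (α : L → X) (β : L → Y)
    (h : ∀ L' : Finset L,
      lghDist (fun i : L' => α i.1) (fun i : L' => β i.1) = 0)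
    (hclosed : IsClosed (Set.range α)) :
    lghDist α β = 0 := by
  classical
  by_cases hX : Nonempty X
  · by_cases hY : Nonempty Y
    · -- main case
      refine le_antisymm ?_ (Real.sInf_nonneg fun t ht => ht.1)
      have main : ∀ ε > (0 : ℝ), lghDist α β ≤ 0 + ε := by
        intro ε hε
        set δ : ℝ := ε / 3 with hδdef
        have hδ : 0 < δ := by positivity
        -- finite δ-net of range α from compactness
        have hcover : Set.range α ⊆ ⋃ ℓ : L, ball (α ℓ) δ := by
          rintro x ⟨ℓ, rfl⟩
          exact mem_iUnion.2 ⟨ℓ, mem_ball_self hδ⟩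
        obtain ⟨L', hL'⟩ := hclosed.isCompact.elim_finite_subcover
          (fun ℓ : L => ball (α ℓ) δ) (fun _ => isOpen_ball) hcover
        obtain ⟨t, ht0, htδ, d, hd1, hd2, hd3, hd4, hd5, hd6, hd7, hd8⟩ :=
          exists_small_admissible (fun i : L' => α i.1) (fun i : L' => β i.1) (h L') hδ
        have hmem : (t + 2 * δ) ∈
            {s : ℝ | 0 ≤ s ∧ ∃ d : X ⊕ Y → X ⊕ Y → ℝ, IsAdmissible α β s d} := by
          refine ⟨by linarith, d, hd1, hd2, hd3, hd4, hd5, ?_, ?_, ?_⟩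
          · intro x ε' hε'
            obtain ⟨y, hy⟩ := hd6 x ε' hε'
            exact ⟨y, hy.trans (by linarith)⟩
          · intro y ε' hε'
            obtain ⟨x, hx⟩ := hd7 y ε' hε'
            exact ⟨x, hx.trans (by linarith)⟩
          · intro ℓ
            have hx : α ℓ ∈ ⋃ ℓ' ∈ L', ball (α ℓ') δ := hL' ⟨ℓ, rfl⟩
            simp only [mem_iUnion, mem_ball, exists_prop] at hx
            obtain ⟨ℓ', hℓ', hdist⟩ := hx
            have h8 := hd8 ⟨ℓ', hℓ'⟩
            simp only at h8
            have hβ : dist (β ℓ') (β ℓ) ≤ dist (α ℓ') (α ℓ) := dist_beta_le α β h ℓ' ℓ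
            have t1 := hd3 (Sum.inl (α ℓ)) (Sum.inl (α ℓ')) (Sum.inr (β ℓ))
            have t2 := hd3 (Sum.inl (α ℓ')) (Sum.inr (β ℓ')) (Sum.inr (β ℓ))
            have e1 := hd4 (α ℓ) (α ℓ')
            have e2 := hd5 (β ℓ') (β ℓ)
            have hdist' : dist (α ℓ') (α ℓ) < δ := by rwa [dist_comm]
            linarith
        have hbdd : BddBelow {s : ℝ | 0 ≤ s ∧ ∃ d : X ⊕ Y → X ⊕ Y → ℝ, IsAdmissible α β s d} :=
          ⟨0, fun s hs => hs.1⟩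
        calc lghDist α β ≤ t + 2 * δ := csInf_le hbdd hmem
          _ ≤ 0 + ε := by rw [hδdef]; linarith
      exact le_of_forall_pos_le_add main
    · -- Y empty, X nonempty: the admissible set is empty
      rw [not_nonempty_iff] at hY
      have hempty : {t : ℝ | 0 ≤ t ∧ ∃ d : X ⊕ Y → X ⊕ Y → ℝ, IsAdmissible α β t d} = ∅ := by
        ext t
        simp only [mem_setOf_eq, mem_empty_iff_false, iff_false, not_and]
        rintro ht0 ⟨d, hd⟩
        obtain ⟨y, -⟩ := hd.2.2.2.2.2.1 (Classical.arbitrary X) 1 one_pos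
        exact hY.elim y
      rw [lghDist, hempty, Real.sInf_empty]
  · rw [not_nonempty_iff] at hX
    by_cases hY : Nonempty Y
    · -- X empty, Y nonempty: the admissible set is empty
      have hempty : {t : ℝ | 0 ≤ t ∧ ∃ d : X ⊕ Y → X ⊕ Y → ℝ, IsAdmissible α β t d} = ∅ := by
        ext t
        simp only [mem_setOf_eq, mem_empty_iff_false, iff_false, not_and]
        rintro ht0 ⟨d, hd⟩
        obtain ⟨x, -⟩ := hd.2.2.2.2.2.2.1 (Classical.arbitrary Y) 1 one_pos
        exact hX.elim x
      rw [lghDist, hempty, Real.sInf_empty]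
    · -- both empty: 0 is admissible
      rw [not_nonempty_iff] at hY
      have hmem : (0 : ℝ) ∈ {t : ℝ | 0 ≤ t ∧ ∃ d : X ⊕ Y → X ⊕ Y → ℝ, IsAdmissible α β t d} := by
        refine ⟨le_refl 0, fun _ _ => 0, fun p => rfl, fun p q => rfl,
          fun p q r => by norm_num, fun x => isEmptyElim x, fun y => isEmptyElim y,
          fun x => isEmptyElim x, fun y => isEmptyElim y, fun ℓ => isEmptyElim (α ℓ)⟩
      exact le_antisymm (csInf_le ⟨0, fun s hs => hs.1⟩ hmem) (Real.sInf_nonneg fun t ht => ht.1)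
end
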